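/- arXiv:quant-ph/0701194 — 7 statements merged into one kernel-verified Lean document; each statement's English description precedes it below -/
import Mathlib

section
/- Every matrix in GL_n(F_2) can be written as a product of at most C·n² adjacent elementary matrices, for some absolute constant C (e.g. C = 3 suffices). -/
open Matrix

/-- The matrix with a single `1` in position `(i, j)`, over `F_2`. -/
def stdE (n : ℕ) (i j : Fin n) : Matrix (Fin n) (Fin n) (ZMod 2) :=
  Matrix.single i j 1

/-- `A` is an adjacent elementary ("adjacent CNOT") matrix:
`A = 1 + E_{i,i+1}` or `A = 1 + E_{i+1,i}` (0-indexed). -/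
def IsAdjElem (n : ℕ) (A : Matrix (Fin n) (Fin n) (ZMod 2)) : Prop :=
  ∃ i : ℕ, ∃ h : i + 1 < n,
    A = 1 + stdE n ⟨i, by omega⟩ ⟨i + 1, h⟩ ∨ A = 1 + stdE n ⟨i + 1, h⟩ ⟨i, by omega⟩

/-- The matrix of a gate `(i, d)`.  As a column operation (acting on the right),
`(i, true)` adds column `i` into column `i+1` and `(i, false)` adds column `i+1`
into column `i` (0-indexed). -/
def gateMat (n : ℕ) (g : ℕ × Bool) : Matrix (Fin n) (Fin n) (ZMod 2) :=
  if h : g.1 + 1 < n then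
    if g.2 then 1 + stdE n ⟨g.1, by omega⟩ ⟨g.1 + 1, h⟩
    else 1 + stdE n ⟨g.1 + 1, h⟩ ⟨g.1, by omega⟩
  else 1

/-- The matrix computed by a sequence of gates applied in order to the identity. -/
def listMat (n : ℕ) (L : List (ℕ × Bool)) : Matrix (Fin n) (Fin n) (ZMod 2) :=
  (L.map (gateMat n)).prod

/-- A valid time-slice on `n` wires: all gates in range, with pairwise disjoint
wire pairs `{i, i+1}`. -/
def ValidSlice (n : ℕ) (s : List (ℕ × Bool)) : Prop :=
  (∀ g ∈ s, g.1 + 1 < n) ∧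
    s.Pairwise fun g g' => g.1 + 2 ≤ g'.1 ∨ g'.1 + 2 ≤ g.1

/-- A valid circuit: a sequence of valid time-slices. -/
def ValidCircuit (n : ℕ) (C : List (List (ℕ × Bool))) : Prop :=
  ∀ s ∈ C, ValidSlice n s

/-- The matrix computed by a circuit (time-slices applied in order). -/
def circuitMat (n : ℕ) (C : List (List (ℕ × Bool))) : Matrix (Fin n) (Fin n) (ZMod 2) :=
  (C.map (listMat n)).prod

/-- The size (total number of gates) of a circuit. -/
def circuitSize (C : List (List (ℕ × Bool))) : ℕ := (C.map List.length).sum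

/-- The reversal permutation matrix: `R i j = 1` iff `i + j = n + 1` (1-indexed). -/
def revMat (n : ℕ) : Matrix (Fin n) (Fin n) (ZMod 2) :=
  Matrix.of fun i j => if i.val + j.val + 1 = n then 1 else 0

/-- Top-left `k × k` block. -/
def blkW (n k : ℕ) (h : k ≤ n) (M : Matrix (Fin n) (Fin n) (ZMod 2)) :
    Matrix (Fin k) (Fin k) (ZMod 2) :=
  M.submatrix (fun i => ⟨i.val, lt_of_lt_of_le i.isLt h⟩)
    (fun j => ⟨j.val, lt_of_lt_of_le j.isLt h⟩)

/-- Top-right `k × (n-k)` block. -/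
def blkX (n k : ℕ) (h : k ≤ n) (M : Matrix (Fin n) (Fin n) (ZMod 2)) :
    Matrix (Fin k) (Fin (n - k)) (ZMod 2) :=
  M.submatrix (fun i => ⟨i.val, lt_of_lt_of_le i.isLt h⟩)
    (fun j => ⟨k + j.val, by have := j.isLt; omega⟩)

/-- Bottom-left `(n-k) × k` block. -/
def blkY (n k : ℕ) (h : k ≤ n) (M : Matrix (Fin n) (Fin n) (ZMod 2)) :
    Matrix (Fin (n - k)) (Fin k) (ZMod 2) :=
  M.submatrix (fun i => ⟨k + i.val, by have := i.isLt; omega⟩)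
    (fun j => ⟨j.val, lt_of_lt_of_le j.isLt h⟩)

/-- Bottom-right `(n-k) × (n-k)` block. -/
def blkZ (n k : ℕ) (h : k ≤ n) (M : Matrix (Fin n) (Fin n) (ZMod 2)) :
    Matrix (Fin (n - k)) (Fin (n - k)) (ZMod 2) :=
  M.submatrix (fun i => ⟨k + i.val, by have := i.isLt; omega⟩)
    (fun j => ⟨k + j.val, by have := j.isLt; omega⟩)

section AuxStmt1

private lemma zmod2_ne_zero {x : ZMod 2} (h : x ≠ 0) : x = 1 := by revert x; decide

private lemma zmod2_add_self (x : ZMod 2) : x + x = 0 := by revert x; decide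

private lemma addRow_mulVec {n : ℕ} (a b : Fin n) (v : Fin n → ZMod 2) :
    (1 + stdE n a b) *ᵥ v = fun i => v i + if i = a then v b else 0 := by
  rw [add_mulVec, one_mulVec, stdE, Matrix.single_mulVec]
  funext i
  simp [Function.update_apply, eq_comm]

private lemma stdE_transpose {n : ℕ} (a b : Fin n) : (stdE n a b)ᵀ = stdE n b a := by
  ext i j
  simp [stdE, Matrix.single, and_comm]

private lemma vecMul_addCol {n : ℕ} (a b : Fin n) (w : Fin n → ZMod 2) :
    w ᵥ* (1 + stdE n a b) = fun j => w j + if j = b then w a else 0 := by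
  have h : (1 + stdE n a b) = (1 + stdE n b a)ᵀ := by
    rw [transpose_add, transpose_one, stdE_transpose]
  rw [h, vecMul_transpose, addRow_mulVec]

private lemma adj_mul_self {n : ℕ} {A : Matrix (Fin n) (Fin n) (ZMod 2)}
    (h : IsAdjElem n A) : A * A = 1 := by
  have key : ∀ (a b : Fin n), a ≠ b → (1 + stdE n a b) * (1 + stdE n a b) = 1 := by
    intro a b hab
    have h0 : stdE n a b * stdE n a b = 0 :=
      Matrix.single_mul_single_of_ne (i := a) (j := b) (k := a) (h := hab.symm) (c := 1) (d := 1)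
    have h2 : stdE n a b + stdE n a b = 0 := by
      ext i j; simp [zmod2_add_self]
    have : (1 + stdE n a b) * (1 + stdE n a b)
        = 1 + (stdE n a b + stdE n a b) + stdE n a b * stdE n a b := by noncomm_ring
    rw [this, h0, h2, add_zero, add_zero]
  obtain ⟨i, hi, h | h⟩ := h <;> subst h <;> apply key <;> simp [Fin.ext_iff] <;> omega

end AuxStmt1

private lemma colReduce (n : ℕ) (hn : 0 < n) : ∀ (k : ℕ), k < n → ∀ (v : Fin n → ZMod 2), v ≠ 0 →
    (∀ i : Fin n, k < i.val → v i = 0) →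
    ∃ L : List (Matrix (Fin n) (Fin n) (ZMod 2)),
      (∀ A ∈ L, IsAdjElem n A) ∧ L.length ≤ 2 * k ∧
      L.prod *ᵥ v = Pi.single ⟨0, hn⟩ 1 := by
  intro k
  induction k with
  | zero =>
    intro _ v hv hsupp
    have hv0 : v ⟨0, hn⟩ = 1 := by
      by_contra h
      apply hv
      funext i
      rcases Nat.eq_zero_or_pos i.val with h0 | h0
      · have : i = ⟨0, hn⟩ := Fin.ext h0
        rw [this]
        by_contra h'
        exact h (zmod2_ne_zero h')
      · exact hsupp i h0
    refine ⟨[], by simp, by simp, ?_⟩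
    rw [List.prod_nil, one_mulVec]
    funext i
    rcases eq_or_ne i ⟨0, hn⟩ with rfl | h
    · rw [hv0, Pi.single_eq_same]
    · rw [hsupp i (by rcases Nat.eq_zero_or_pos i.val with h0 | h0; exacts [absurd (Fin.ext h0) h, h0]), Pi.single_eq_of_ne h]
  | succ k ih =>
    intro hk v hv hsupp
    set a : Fin n := ⟨k, by omega⟩ with ha
    set b : Fin n := ⟨k + 1, hk⟩ with hb
    have hab : a ≠ b := by simp [ha, hb, Fin.ext_iff]
    by_cases hvb : v b = 0
    · obtain ⟨L, h1, h2, h3⟩ := ih (by omega) v hv (fun i hi => by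
        rcases eq_or_ne i b with rfl | h
        · exact hvb
        · exact hsupp i (by have : i.val ≠ k + 1 := fun hh => h (Fin.ext hh); omega))
      exact ⟨L, h1, by omega, h3⟩
    · have hvb1 : v b = 1 := zmod2_ne_zero hvb
      set A : Matrix (Fin n) (Fin n) (ZMod 2) := 1 + stdE n b a with hAdef
      have hAadj : IsAdjElem n A := ⟨k, hk, Or.inr rfl⟩
      by_cases hva : v a = 0
      · -- two ops: B adds row b into row a, then A adds row a into row b
        set B : Matrix (Fin n) (Fin n) (ZMod 2) := 1 + stdE n a b with hBdef
        have hBadj : IsAdjElem n B := ⟨k, hk, Or.inl rfl⟩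
        set w : Fin n → ZMod 2 := A *ᵥ (B *ᵥ v) with hw
        have hwval : ∀ i, w i = (v i + if i = a then v b else 0)
            + (if i = b then (v a + v b) else 0) := by
          intro i
          rw [hw, hBdef, hAdef, addRow_mulVec, addRow_mulVec]
          simp only []
          rcases eq_or_ne i b with rfl | h
          · simp [hab, hab.symm]
          · simp [h]
        have hwa : w a = 1 := by rw [hwval a]; simp [hab, hva, hvb1]
        have hwb : w b = 0 := by rw [hwval b]; simp [hab.symm, hva, hvb1, zmod2_add_self]
        have hwo : ∀ i, i ≠ a → i ≠ b → w i = v i := by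
          intro i h1 h2; rw [hwval i]; simp [h1, h2]
        obtain ⟨L, hL1, hL2, hL3⟩ := ih (by omega) w
          (fun h0 => one_ne_zero (α := ZMod 2) (by rw [← hwa, h0]; simp))
          (fun i hi => by
            rcases eq_or_ne i b with rfl | h
            · exact hwb
            · have hib : i.val ≠ k + 1 := fun hh => h (Fin.ext (by simp [hb, hh]))
              have hia : i ≠ a := fun hh => by rw [hh] at hi; exact absurd hi (by simp [ha])
              rw [hwo i hia h]
              exact hsupp i (by omega))
        refine ⟨L ++ [A, B], ?_, by simp; omega, ?_⟩
        · intro X hX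
          rcases List.mem_append.mp hX with h | h
          · exact hL1 X h
          · simp at h
            rcases h with rfl | rfl
            · exact hAadj
            · exact hBadj
        · rw [List.prod_append, ← mulVec_mulVec]
          have : ([A, B]).prod = A * B := by simp
          rw [this, ← mulVec_mulVec, ← hw, hL3]
      · -- one op: A adds row a into row b
        have hva1 : v a = 1 := zmod2_ne_zero hva
        set w : Fin n → ZMod 2 := A *ᵥ v with hw
        have hwval : ∀ i, w i = v i + if i = b then v a else 0 := by
          intro i; rw [hw, hAdef, addRow_mulVec]
        have hwa : w a = 1 := by rw [hwval a]; simp [hab, hva1]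
        have hwb : w b = 0 := by rw [hwval b]; simp [hva1, hvb1, zmod2_add_self]
        have hwo : ∀ i, i ≠ b → w i = v i := by
          intro i h2; rw [hwval i]; simp [h2]
        obtain ⟨L, hL1, hL2, hL3⟩ := ih (by omega) w
          (fun h0 => one_ne_zero (α := ZMod 2) (by rw [← hwa, h0]; simp))
          (fun i hi => by
            rcases eq_or_ne i b with rfl | h
            · exact hwb
            · have hib : i.val ≠ k + 1 := fun hh => h (Fin.ext (by simp [hb, hh]))
              rw [hwo i h]
              exact hsupp i (by omega))
        refine ⟨L ++ [A], ?_, by simp; omega, ?_⟩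
        · intro X hX
          rcases List.mem_append.mp hX with h | h
          · exact hL1 X h
          · simp at h; subst h; exact hAadj
        · rw [List.prod_append, List.prod_singleton, ← mulVec_mulVec, ← hw, hL3]

private lemma rowReduce (n : ℕ) (hn : 0 < n) : ∀ (k : ℕ), k < n → ∀ (w : Fin n → ZMod 2),
    w ⟨0, hn⟩ = 1 →
    (∀ i : Fin n, k < i.val → w i = 0) →
    ∃ L : List (Matrix (Fin n) (Fin n) (ZMod 2)),
      (∀ A ∈ L, IsAdjElem n A) ∧ L.length ≤ 2 * k ∧
      w ᵥ* L.prod = Pi.single ⟨0, hn⟩ 1 ∧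
      L.prod *ᵥ Pi.single ⟨0, hn⟩ 1 = Pi.single ⟨0, hn⟩ 1 := by
  intro k
  induction k with
  | zero =>
    intro _ w hw0 hsupp
    refine ⟨[], by simp, by simp, ?_, by rw [List.prod_nil, one_mulVec]⟩
    rw [List.prod_nil, vecMul_one]
    funext i
    rcases eq_or_ne i ⟨0, hn⟩ with rfl | h
    · rw [hw0, Pi.single_eq_same]
    · have hpos : 0 < i.val := by
        rcases Nat.eq_zero_or_pos i.val with h0 | h0
        · exact absurd (Fin.ext h0) h
        · exact h0
      rw [hsupp i hpos, Pi.single_eq_of_ne h]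
  | succ k ih =>
    intro hk w hw0 hsupp
    set a : Fin n := ⟨k, by omega⟩ with ha
    set b : Fin n := ⟨k + 1, hk⟩ with hb
    have hab : a ≠ b := by simp [ha, hb, Fin.ext_iff]
    have hb0 : b ≠ ⟨0, hn⟩ := by simp [hb, Fin.ext_iff]
    by_cases hwb : w b = 0
    · obtain ⟨L, h1, h2, h3, h4⟩ := ih (by omega) w hw0 (fun i hi => by
        rcases eq_or_ne i b with rfl | h
        · exact hwb
        · exact hsupp i (by have : i.val ≠ k + 1 := fun hh => h (Fin.ext hh); omega))
      exact ⟨L, h1, by omega, h3, h4⟩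
    · have hwb1 : w b = 1 := zmod2_ne_zero hwb
      -- O1 adds column a into column b
      set O1 : Matrix (Fin n) (Fin n) (ZMod 2) := 1 + stdE n a b with hO1def
      have hO1adj : IsAdjElem n O1 := ⟨k, hk, Or.inl rfl⟩
      have hO1e : O1 *ᵥ Pi.single ⟨0, hn⟩ 1 = Pi.single ⟨0, hn⟩ 1 := by
        rw [hO1def, addRow_mulVec]
        funext i
        rw [Pi.single_eq_of_ne hb0]
        simp
      by_cases hwa : w a = 0
      · -- k ≠ 0 here since w ⟨0⟩ = 1 ≠ 0
        have hk0 : k ≠ 0 := by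
          intro h0
          apply one_ne_zero (α := ZMod 2)
          rw [← hw0, ← hwa]
          congr 1
          exact Fin.ext (by simp [ha, h0])
        have ha0 : a ≠ ⟨0, hn⟩ := by simp [ha, Fin.ext_iff]; omega
        -- O2 adds column b into column a
        set O2 : Matrix (Fin n) (Fin n) (ZMod 2) := 1 + stdE n b a with hO2def
        have hO2adj : IsAdjElem n O2 := ⟨k, hk, Or.inr rfl⟩
        have hO2e : O2 *ᵥ Pi.single ⟨0, hn⟩ 1 = Pi.single ⟨0, hn⟩ 1 := by
          rw [hO2def, addRow_mulVec]
          funext i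
          rw [Pi.single_eq_of_ne ha0]
          simp
        set u : Fin n → ZMod 2 := (w ᵥ* O2) ᵥ* O1 with hu
        have huval : ∀ j, u j = (w j + if j = a then w b else 0)
            + (if j = b then (w a + w b) else 0) := by
          intro j
          rw [hu, hO2def, hO1def, vecMul_addCol, vecMul_addCol]
          simp only []
          rcases eq_or_ne j b with rfl | h
          · simp [hab, hab.symm]
          · simp [h]
        have hua : u ⟨0, hn⟩ = 1 := by
          rw [huval]; simp [Ne.symm ha0, Ne.symm hb0, hw0]
        have hub : u b = 0 := by rw [huval b]; simp [hab.symm, hwa, hwb1, zmod2_add_self]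
        have huo : ∀ j, j ≠ a → j ≠ b → u j = w j := by
          intro j h1 h2; rw [huval j]; simp [h1, h2]
        obtain ⟨L, hL1, hL2, hL3, hL4⟩ := ih (by omega) u hua
          (fun i hi => by
            rcases eq_or_ne i b with rfl | h
            · exact hub
            · have hib : i.val ≠ k + 1 := fun hh => h (Fin.ext hh)
              have hia : i ≠ a := fun hh => by rw [hh] at hi; exact absurd hi (by simp [ha])
              rw [huo i hia h]
              exact hsupp i (by omega))
        refine ⟨O2 :: O1 :: L, ?_, by simp; omega, ?_, ?_⟩
        · intro X hX
          simp at hX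
          rcases hX with rfl | rfl | h
          · exact hO2adj
          · exact hO1adj
          · exact hL1 X h
        · rw [List.prod_cons, List.prod_cons, ← vecMul_vecMul, ← vecMul_vecMul, ← hu, hL3]
        · rw [List.prod_cons, List.prod_cons, ← mulVec_mulVec, ← mulVec_mulVec,
            hL4, hO1e, hO2e]
      · have hwa1 : w a = 1 := zmod2_ne_zero hwa
        set u : Fin n → ZMod 2 := w ᵥ* O1 with hu
        have huval : ∀ j, u j = w j + if j = b then w a else 0 := by
          intro j; rw [hu, hO1def, vecMul_addCol]
        have hua : u ⟨0, hn⟩ = 1 := by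
          rw [huval]; simp [Ne.symm hb0, hw0]
        have hub : u b = 0 := by rw [huval b]; simp [hwa1, hwb1, zmod2_add_self]
        have huo : ∀ j, j ≠ b → u j = w j := by
          intro j h2; rw [huval j]; simp [h2]
        obtain ⟨L, hL1, hL2, hL3, hL4⟩ := ih (by omega) u hua
          (fun i hi => by
            rcases eq_or_ne i b with rfl | h
            · exact hub
            · have hib : i.val ≠ k + 1 := fun hh => h (Fin.ext hh)
              rw [huo i h]
              exact hsupp i (by omega))
        refine ⟨O1 :: L, ?_, by simp; omega, ?_, ?_⟩
        · intro X hX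
          simp at hX
          rcases hX with rfl | h
          · exact hO1adj
          · exact hL1 X h
        · rw [List.prod_cons, ← vecMul_vecMul, ← hu, hL3]
        · rw [List.prod_cons, ← mulVec_mulVec, hL4, hO1e]

private def liftMat {m : ℕ} (M : Matrix (Fin m) (Fin m) (ZMod 2)) :
    Matrix (Fin (m + 1)) (Fin (m + 1)) (ZMod 2) :=
  Matrix.of (Fin.cons (Fin.cons 1 0) (fun i => Fin.cons 0 (M i)))

private lemma liftMat_one {m : ℕ} : liftMat (1 : Matrix (Fin m) (Fin m) (ZMod 2)) = 1 := by
  ext i j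
  refine Fin.cases ?_ (fun i => ?_) i <;> refine Fin.cases ?_ (fun j => ?_) j <;>
    simp [liftMat, Matrix.one_apply, Fin.succ_ne_zero, (Fin.succ_ne_zero _).symm, Fin.succ_inj]

private lemma liftMat_mul {m : ℕ} (A B : Matrix (Fin m) (Fin m) (ZMod 2)) :
    liftMat (A * B) = liftMat A * liftMat B := by
  ext i j
  refine Fin.cases ?_ (fun i => ?_) i <;> refine Fin.cases ?_ (fun j => ?_) j <;>
    simp [liftMat, Matrix.mul_apply, Fin.sum_univ_succ]

private lemma liftMat_prod {m : ℕ} (L : List (Matrix (Fin m) (Fin m) (ZMod 2))) :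
    (L.map liftMat).prod = liftMat L.prod := by
  induction L with
  | nil => simp [liftMat_one]
  | cons a t iht => simp [List.prod_cons, liftMat_mul, iht]

private lemma liftMat_adj {m : ℕ} {A : Matrix (Fin m) (Fin m) (ZMod 2)}
    (h : IsAdjElem m A) : IsAdjElem (m + 1) (liftMat A) := by
  obtain ⟨i, hi, hc | hc⟩ := h <;> subst hc <;> refine ⟨i + 1, by omega, ?_⟩
  · left
    ext r c
    refine Fin.cases ?_ (fun r => ?_) r <;> refine Fin.cases ?_ (fun c => ?_) c <;>
      simp [liftMat, Matrix.add_apply, Matrix.one_apply, stdE, Matrix.single,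
        Fin.succ_ne_zero, (Fin.succ_ne_zero _).symm, Fin.succ_inj, Fin.ext_iff, Fin.val_succ]
  · right
    ext r c
    refine Fin.cases ?_ (fun r => ?_) r <;> refine Fin.cases ?_ (fun c => ?_) c <;>
      simp [liftMat, Matrix.add_apply, Matrix.one_apply, stdE, Matrix.single,
        Fin.succ_ne_zero, (Fin.succ_ne_zero _).symm, Fin.succ_inj, Fin.ext_iff, Fin.val_succ]

private lemma reverse_prod_mul {Mo : Type*} [Monoid Mo] :
    ∀ (L : List Mo), (∀ A ∈ L, A * A = 1) → L.reverse.prod * L.prod = 1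
  | [], _ => by simp
  | a :: t, h => by
    rw [List.reverse_cons, List.prod_append, List.prod_cons, List.prod_cons, List.prod_nil, mul_one]
    have : t.reverse.prod * a * (a * t.prod) = t.reverse.prod * ((a * a) * t.prod) := by
      rw [mul_assoc, ← mul_assoc a a]
    rw [this, h a (by simp), one_mul]
    exact reverse_prod_mul t (fun A hA => h A (by simp [hA]))

private lemma prod_mul_reverse {Mo : Type*} [Monoid Mo]
    (L : List Mo) (h : ∀ A ∈ L, A * A = 1) : L.prod * L.reverse.prod = 1 := by
  have := reverse_prod_mul L.reverse (fun A hA => h A (by simpa using hA))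
  rwa [List.reverse_reverse] at this

private lemma stmt1_aux : ∀ (n : ℕ) (M : Matrix (Fin n) (Fin n) (ZMod 2)), IsUnit M.det →
    ∃ L : List (Matrix (Fin n) (Fin n) (ZMod 2)),
      (∀ A ∈ L, IsAdjElem n A) ∧ L.prod = M ∧ L.length ≤ 2 * n * n := by
  intro n
  induction n with
  | zero =>
    intro M _
    refine ⟨[], by simp, ?_, by simp⟩
    rw [List.prod_nil]
    ext i j
    exact i.elim0
  | succ m ih =>
    intro M hM
    have hn : 0 < m + 1 := Nat.succ_pos m
    have hz : (⟨0, hn⟩ : Fin (m + 1)) = 0 := by simp [Fin.ext_iff]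
    -- Step 1: row-reduce column 0 to e₀
    have hv : (fun i => M i 0) ≠ 0 := by
      intro h
      rw [Matrix.det_eq_zero_of_column_eq_zero 0 (fun i => congrFun h i)] at hM
      simp at hM
    obtain ⟨E, hEadj, hElen, hEv⟩ := colReduce (m + 1) hn m (by omega) (fun i => M i 0) hv
      (fun i hi => absurd i.isLt (by omega))
    rw [hz] at hEv
    set N := E.prod * M with hN
    have hMe : M *ᵥ Pi.single (0 : Fin (m + 1)) 1 = fun i => M i 0 := by
      rw [mulVec_single_one]; funext i; rfl
    have hNcol : N *ᵥ Pi.single (0 : Fin (m + 1)) 1 = Pi.single 0 1 := by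
      rw [hN, ← mulVec_mulVec, hMe, hEv]
    have hw0 : N 0 0 = 1 := by
      have h := congrFun hNcol 0
      simpa using h
    -- Step 2: column-reduce row 0 to e₀
    obtain ⟨F, hFadj, hFlen, hFw, hFe⟩ := rowReduce (m + 1) hn m (by omega) (fun j => N 0 j)
      (by show N 0 ⟨0, hn⟩ = 1; rw [hz]; exact hw0)
      (fun i hi => absurd i.isLt (by omega))
    rw [hz] at hFw hFe
    set P := N * F.prod with hP
    have hProw : ∀ j, P 0 j = (Pi.single 0 1 : Fin (m + 1) → ZMod 2) j := by
      intro j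
      have h := congrFun hFw j
      simpa [Matrix.vecMul, dotProduct, Matrix.mul_apply, hP] using h
    have hPcol : ∀ i, P i 0 = (Pi.single 0 1 : Fin (m + 1) → ZMod 2) i := by
      intro i
      have h : P *ᵥ Pi.single (0 : Fin (m + 1)) 1 = Pi.single 0 1 := by
        rw [hP, ← mulVec_mulVec, hFe, hNcol]
      simpa using congrFun h i
    set M' := P.submatrix Fin.succ Fin.succ with hM'
    have hPlift : liftMat M' = P := by
      ext i j
      refine Fin.cases ?_ (fun i => ?_) i <;> refine Fin.cases ?_ (fun j => ?_) j
      · rw [hProw 0]; simp [liftMat]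
      · rw [hProw j.succ]; simp [liftMat, Pi.single_eq_of_ne (Fin.succ_ne_zero j)]
      · rw [hPcol i.succ]; simp [liftMat, Pi.single_eq_of_ne (Fin.succ_ne_zero i)]
      · simp [liftMat, hM']
    have hdetP : P.det = M'.det := by
      rw [Matrix.det_succ_column_zero, Fin.sum_univ_succ]
      simp [hPcol, Pi.single_eq_of_ne, Fin.succ_ne_zero, Fin.succAbove_zero, hM']
    have hPunit : IsUnit P := by
      have h1 : IsUnit E.prod := List.prod_isUnit
        (fun A hA => ⟨⟨A, A, adj_mul_self (hEadj A hA), adj_mul_self (hEadj A hA)⟩, rfl⟩)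
      have h2 : IsUnit F.prod := List.prod_isUnit
        (fun A hA => ⟨⟨A, A, adj_mul_self (hFadj A hA), adj_mul_self (hFadj A hA)⟩, rfl⟩)
      have hMu : IsUnit M := (Matrix.isUnit_iff_isUnit_det M).mpr hM
      rw [hP, hN]
      exact (h1.mul hMu).mul h2
    have hM'det : IsUnit M'.det := by
      rw [← hdetP]
      exact (Matrix.isUnit_iff_isUnit_det P).mp hPunit
    obtain ⟨L', hL'adj, hL'prod, hL'len⟩ := ih M' hM'det
    have h1 : E.reverse.prod * E.prod = 1 :=
      reverse_prod_mul E (fun A hA => adj_mul_self (hEadj A hA))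
    have h2 : F.prod * F.reverse.prod = 1 :=
      prod_mul_reverse F (fun A hA => adj_mul_self (hFadj A hA))
    refine ⟨E.reverse ++ (L'.map liftMat ++ F.reverse), ?_, ?_, ?_⟩
    · intro A hA
      rcases List.mem_append.mp hA with h | h
      · exact hEadj A (List.mem_reverse.mp h)
      · rcases List.mem_append.mp h with h | h
        · obtain ⟨B, hB, rfl⟩ := List.mem_map.mp h
          exact liftMat_adj (hL'adj B hB)
        · exact hFadj A (List.mem_reverse.mp h)
    · rw [List.prod_append, List.prod_append, liftMat_prod, hL'prod, hPlift, hP, hN]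
      calc E.reverse.prod * (E.prod * M * F.prod * F.reverse.prod)
          = E.reverse.prod * (E.prod * M * (F.prod * F.reverse.prod)) := by rw [mul_assoc]
        _ = E.reverse.prod * (E.prod * M) := by rw [h2, mul_one]
        _ = E.reverse.prod * E.prod * M := by rw [← mul_assoc]
        _ = M := by rw [h1, one_mul]
    · have hlen : (E.reverse ++ (L'.map liftMat ++ F.reverse)).length
          = E.length + (L'.length + F.length) := by simp
      rw [hlen]
      nlinarith [hElen, hFlen, hL'len]

/-- every invertible matrix over `F_2` is a product of at most
`3 n²` adjacent elementary matrices. -/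
theorem stmt1 (n : ℕ) (M : Matrix (Fin n) (Fin n) (ZMod 2)) (hM : IsUnit M.det) :
    ∃ L : List (Matrix (Fin n) (Fin n) (ZMod 2)),
      (∀ A ∈ L, IsAdjElem n A) ∧ L.prod = M ∧ L.length ≤ 3 * n ^ 2 := by
  obtain ⟨L, h1, h2, h3⟩ := stmt1_aux n M hM
  exact ⟨L, h1, h2, by rw [pow_two]; nlinarith⟩
end

section
/- Any sequence of adjacent column operations transforming the n×n identity matrix into the reversal permutation matrix (the matrix of the permutation i ↦ n+1-i) must, for every k ≤ n/2, contain at least k operations adding column k+1 into column k and at least k operations adding column k into column k+1. -/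
open Matrix

section RankAux
variable {m n : Type*} [Fintype m] [Fintype n]

lemma rank_add_le' (A B : Matrix m n (ZMod 2)) : (A + B).rank ≤ A.rank + B.rank := by
  classical
  have h : LinearMap.range (A + B).mulVecLin ≤
      LinearMap.range A.mulVecLin ⊔ LinearMap.range B.mulVecLin := by
    rintro x ⟨y, rfl⟩
    rw [Matrix.mulVecLin_add]
    exact Submodule.add_mem_sup ⟨y, rfl⟩ ⟨y, rfl⟩
  exact le_trans (Submodule.finrank_mono h)
    (Submodule.finrank_add_le_finrank_add_finrank _ _)

lemma rank_vecMulVec_le (w : m → ZMod 2) (v : n → ZMod 2) :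
    (Matrix.vecMulVec w v).rank ≤ 1 := by
  rw [Matrix.vecMulVec_eq Unit]
  exact le_trans (Matrix.rank_mul_le_left _ _)
    (le_trans (Matrix.rank_le_card_width _) (by simp))

lemma mul_one_add_stdBM {α : Type*} [DecidableEq n] (M : Matrix α n (ZMod 2))
    (i j : n) (a : α) (b : n) :
    (M * ((1 + Matrix.single i j (1 : ZMod 2)) : Matrix n n (ZMod 2))) a b
      = M a b + if b = j then M a i else 0 := by
  rw [Matrix.mul_add, Matrix.mul_one, Matrix.add_apply]
  congr 1
  rw [Matrix.mul_apply]
  simp only [Matrix.single, Matrix.of_apply, mul_ite, mul_one, mul_zero]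
  by_cases h : b = j
  · subst h
    simp [Finset.sum_ite_eq]
  · rw [if_neg h]
    apply Finset.sum_eq_zero
    intro c _
    rw [if_neg]
    rintro ⟨-, rfl⟩
    exact h rfl
end RankAux


section ColOps
variable {n m m' : ℕ}

lemma sub_unchanged (M : Matrix (Fin n) (Fin n) (ZMod 2)) (i j : Fin n)
    (r : Fin m' → Fin n) (c : Fin m → Fin n) (hj : ∀ b, c b ≠ j) :
    (M * (1 + stdE n i j)).submatrix r c = M.submatrix r c := by
  ext a b
  rw [Matrix.submatrix_apply, stdE, mul_one_add_stdBM, if_neg (hj b), add_zero,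
    Matrix.submatrix_apply]

lemma sub_internal (M : Matrix (Fin n) (Fin n) (ZMod 2)) (i j : Fin n)
    (r : Fin m' → Fin n) (c : Fin m → Fin n) (i' j' : Fin m) (hi : c i' = i)
    (hj : ∀ b, c b = j ↔ b = j') :
    (M * (1 + stdE n i j)).submatrix r c
      = M.submatrix r c * (1 + Matrix.single i' j' (1 : ZMod 2)) := by
  ext a b
  rw [Matrix.submatrix_apply, stdE, mul_one_add_stdBM, mul_one_add_stdBM]
  congr 1
  by_cases h : b = j'
  · rw [if_pos ((hj b).mpr h), if_pos h, Matrix.submatrix_apply, hi]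
  · rw [if_neg (fun hc => h ((hj b).mp hc)), if_neg h]

lemma sub_crossing (M : Matrix (Fin n) (Fin n) (ZMod 2)) (i j : Fin n)
    (r : Fin m' → Fin n) (c : Fin m → Fin n) (j' : Fin m)
    (hj : ∀ b, c b = j ↔ b = j') :
    (M * (1 + stdE n i j)).submatrix r c
      = M.submatrix r c
        + Matrix.vecMulVec (fun a => M (r a) i) (fun b => if b = j' then 1 else 0) := by
  ext a b
  rw [Matrix.submatrix_apply, stdE, mul_one_add_stdBM, Matrix.add_apply,
    Matrix.submatrix_apply]
  congr 1
  rw [Matrix.vecMulVec_apply, mul_ite, mul_one, mul_zero]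
  by_cases h : b = j'
  · rw [if_pos ((hj b).mpr h), if_pos h]
  · rw [if_neg (fun hc => h ((hj b).mp hc)), if_neg h]

end ColOps

section Wrappers
variable {n k : ℕ}

lemma blkX_unchanged (hk : k ≤ n) (M : Matrix (Fin n) (Fin n) (ZMod 2))
    {i j : ℕ} (hi : i < n) (hj : j < n) (hjk : j < k) :
    blkX n k hk (M * (1 + stdE n ⟨i, hi⟩ ⟨j, hj⟩)) = blkX n k hk M :=
  sub_unchanged M _ _ _ _ (fun b => by
    have hb := b.isLt
    simp only [ne_eq, Fin.mk.injEq]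
    omega)

lemma blkX_internal (hk : k ≤ n) (M : Matrix (Fin n) (Fin n) (ZMod 2))
    {i j : ℕ} (hi : i < n) (hj : j < n) (hik : k ≤ i) (hjk : k ≤ j) :
    blkX n k hk (M * (1 + stdE n ⟨i, hi⟩ ⟨j, hj⟩))
      = blkX n k hk M * (1 + Matrix.single
          (⟨i - k, by omega⟩ : Fin (n - k)) (⟨j - k, by omega⟩ : Fin (n - k)) (1 : ZMod 2)) :=
  sub_internal M _ _ _ _ _ _ (by simp only [Fin.mk.injEq]; omega) (fun b => by
    have hb := b.isLt
    simp only [Fin.ext_iff]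
    show k + (b : ℕ) = j ↔ (b : ℕ) = j - k
    omega)

lemma blkX_crossing (hk : k ≤ n) (M : Matrix (Fin n) (Fin n) (ZMod 2))
    {i j : ℕ} (hi : i < n) (hj : j < n) (hjk : k ≤ j) :
    blkX n k hk (M * (1 + stdE n ⟨i, hi⟩ ⟨j, hj⟩))
      = blkX n k hk M + Matrix.vecMulVec
          (fun a : Fin k => M ⟨a.val, by omega⟩ ⟨i, hi⟩)
          (fun b : Fin (n - k) => if b = (⟨j - k, by omega⟩ : Fin (n - k)) then 1 else 0) :=
  sub_crossing M _ _ _ _ _ (fun b => by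
    have hb := b.isLt
    simp only [Fin.ext_iff]
    show k + (b : ℕ) = j ↔ (b : ℕ) = j - k
    omega)

lemma blkY_unchanged (hk : k ≤ n) (M : Matrix (Fin n) (Fin n) (ZMod 2))
    {i j : ℕ} (hi : i < n) (hj : j < n) (hjk : k ≤ j) :
    blkY n k hk (M * (1 + stdE n ⟨i, hi⟩ ⟨j, hj⟩)) = blkY n k hk M :=
  sub_unchanged M _ _ _ _ (fun b => by
    have hb := b.isLt
    simp only [ne_eq, Fin.mk.injEq]
    omega)

lemma blkY_internal (hk : k ≤ n) (M : Matrix (Fin n) (Fin n) (ZMod 2))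
    {i j : ℕ} (hi : i < n) (hj : j < n) (hik : i < k) (hjk : j < k) :
    blkY n k hk (M * (1 + stdE n ⟨i, hi⟩ ⟨j, hj⟩))
      = blkY n k hk M * (1 + Matrix.single
          (⟨i, hik⟩ : Fin k) (⟨j, hjk⟩ : Fin k) (1 : ZMod 2)) :=
  sub_internal M _ _ _ _ _ _ (by simp only [Fin.mk.injEq]) (fun b => by
    simp only [Fin.mk.injEq, Fin.ext_iff])

lemma blkY_crossing (hk : k ≤ n) (M : Matrix (Fin n) (Fin n) (ZMod 2))
    {i j : ℕ} (hi : i < n) (hj : j < n) (hjk : j < k) :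
    blkY n k hk (M * (1 + stdE n ⟨i, hi⟩ ⟨j, hj⟩))
      = blkY n k hk M + Matrix.vecMulVec
          (fun a : Fin (n - k) => M ⟨k + a.val, by have := a.isLt; omega⟩ ⟨i, hi⟩)
          (fun b : Fin k => if b = (⟨j, hjk⟩ : Fin k) then 1 else 0) :=
  sub_crossing M _ _ _ _ _ (fun b => by
    simp only [Fin.mk.injEq, Fin.ext_iff])

end Wrappers

section GateLemmas

lemma gateMat_true (n p : ℕ) (hp : p + 1 < n) :
    gateMat n (p, true) = 1 + stdE n ⟨p, by omega⟩ ⟨p + 1, hp⟩ := by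
  simp [gateMat, hp]

lemma gateMat_false (n p : ℕ) (hp : p + 1 < n) :
    gateMat n (p, false) = 1 + stdE n ⟨p + 1, hp⟩ ⟨p, by omega⟩ := by
  simp [gateMat, hp]

lemma gateMat_big (n p : ℕ) (d : Bool) (hp : ¬ p + 1 < n) :
    gateMat n (p, d) = 1 := by
  simp [gateMat, hp]

lemma listMat_cons (n : ℕ) (g : ℕ × Bool) (L : List (ℕ × Bool)) :
    listMat n (g :: L) = gateMat n g * listMat n L := by
  simp [listMat]

end GateLemmas

section Steps
variable {n k : ℕ}

lemma step_true (hk : k ≤ n) (hk1 : 1 ≤ k) (M : Matrix (Fin n) (Fin n) (ZMod 2))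
    (g : ℕ × Bool) :
    (blkX n k hk (M * gateMat n g)).rank
      ≤ (blkX n k hk M).rank + (if g = (k - 1, true) then 1 else 0) := by
  obtain ⟨p, d⟩ := g
  by_cases hp : p + 1 < n
  · cases d with
    | false =>
      rw [gateMat_false n p hp]
      by_cases hpk : p < k
      · rw [blkX_unchanged hk M _ _ hpk]
        exact Nat.le_add_right _ _
      · push_neg at hpk
        rw [blkX_internal hk M _ _ (by omega) hpk]
        exact le_trans (Matrix.rank_mul_le_left _ _) (Nat.le_add_right _ _)
    | true =>
      rw [gateMat_true n p hp]
      rcases lt_trichotomy (p + 1) k with h | h | h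
      · rw [blkX_unchanged hk M _ _ h]
        exact Nat.le_add_right _ _
      · rw [blkX_crossing hk M (show p < n by omega) hp (show k ≤ p + 1 by omega),
          if_pos (by simp only [Prod.mk.injEq, and_true]; omega)]
        exact le_trans (rank_add_le' _ _) (add_le_add le_rfl (_root_.rank_vecMulVec_le _ _))
      · rw [blkX_internal hk M _ _ (by omega) (by omega)]
        exact le_trans (Matrix.rank_mul_le_left _ _) (Nat.le_add_right _ _)
  · rw [gateMat_big n p d hp, mul_one]
    exact Nat.le_add_right _ _

lemma step_false (hk : k ≤ n) (hk1 : 1 ≤ k) (M : Matrix (Fin n) (Fin n) (ZMod 2))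
    (g : ℕ × Bool) :
    (blkY n k hk (M * gateMat n g)).rank
      ≤ (blkY n k hk M).rank + (if g = (k - 1, false) then 1 else 0) := by
  obtain ⟨p, d⟩ := g
  by_cases hp : p + 1 < n
  · cases d with
    | true =>
      rw [gateMat_true n p hp]
      by_cases hpk : p + 1 < k
      · rw [blkY_internal hk M _ _ (by omega) hpk]
        exact le_trans (Matrix.rank_mul_le_left _ _) (Nat.le_add_right _ _)
      · push_neg at hpk
        rw [blkY_unchanged hk M _ _ hpk]
        exact Nat.le_add_right _ _
    | false =>
      rw [gateMat_false n p hp]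
      rcases lt_trichotomy (p + 1) k with h | h | h
      · rw [blkY_internal hk M _ _ h (by omega)]
        exact le_trans (Matrix.rank_mul_le_left _ _) (Nat.le_add_right _ _)
      · rw [blkY_crossing hk M hp (show p < n by omega) (show p < k by omega),
          if_pos (by simp only [Prod.mk.injEq, and_true]; omega)]
        exact le_trans (rank_add_le' _ _) (add_le_add le_rfl (_root_.rank_vecMulVec_le _ _))
      · rw [blkY_unchanged hk M _ _ (by omega)]
        exact Nat.le_add_right _ _
  · rw [gateMat_big n p d hp, mul_one]
    exact Nat.le_add_right _ _

lemma chain_true (hk : k ≤ n) (hk1 : 1 ≤ k) :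
    ∀ (L : List (ℕ × Bool)) (M : Matrix (Fin n) (Fin n) (ZMod 2)),
      (blkX n k hk (M * listMat n L)).rank
        ≤ (blkX n k hk M).rank + L.count (k - 1, true)
  | [], M => by simp [listMat]
  | g :: L, M => by
    rw [listMat_cons, ← mul_assoc]
    refine le_trans (chain_true hk hk1 L (M * gateMat n g)) ?_
    refine le_trans (Nat.add_le_add_right (step_true hk hk1 M g) _) ?_
    rw [List.count_cons]
    simp only [beq_iff_eq]
    split_ifs <;> omega

lemma chain_false (hk : k ≤ n) (hk1 : 1 ≤ k) :
    ∀ (L : List (ℕ × Bool)) (M : Matrix (Fin n) (Fin n) (ZMod 2)),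
      (blkY n k hk (M * listMat n L)).rank
        ≤ (blkY n k hk M).rank + L.count (k - 1, false)
  | [], M => by simp [listMat]
  | g :: L, M => by
    rw [listMat_cons, ← mul_assoc]
    refine le_trans (chain_false hk hk1 L (M * gateMat n g)) ?_
    refine le_trans (Nat.add_le_add_right (step_false hk hk1 M g) _) ?_
    rw [List.count_cons]
    simp only [beq_iff_eq]
    split_ifs <;> omega

end Steps

section RevRank
variable {n k : ℕ}

lemma blkX_rev_apply (hk : k ≤ n) (a : Fin k) (b : Fin (n - k)) :
    blkX n k hk (revMat n) a b = if a.val + k + b.val + 1 = n then 1 else 0 := by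
  simp only [blkX, Matrix.submatrix_apply, revMat, Matrix.of_apply]
  exact if_congr (by omega) rfl rfl

lemma blkY_rev_apply (hk : k ≤ n) (a : Fin (n - k)) (b : Fin k) :
    blkY n k hk (revMat n) a b = if k + a.val + b.val + 1 = n then 1 else 0 := by
  simp only [blkY, Matrix.submatrix_apply, revMat, Matrix.of_apply]

lemma revX_rank (hkn : k ≤ n) (h2k : 2 * k ≤ n) :
    k ≤ (blkX n k hkn (revMat n)).rank := by
  have hXXt : blkX n k hkn (revMat n) * (blkX n k hkn (revMat n))ᵀ = 1 := by
    ext a a'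
    have ha := a.isLt
    have ha' := a'.isLt
    have hb0 : n - k - a.val - 1 < n - k := by omega
    rw [Matrix.mul_apply]
    rw [Finset.sum_congr rfl (fun b _ => show _ =
        if b = (⟨n - k - a.val - 1, hb0⟩ : Fin (n - k)) then
          (if a = a' then (1 : ZMod 2) else 0) else 0 from by
      have hb := b.isLt
      rw [Matrix.transpose_apply, blkX_rev_apply, blkX_rev_apply]
      simp only [Fin.ext_iff]
      show _ = if (b : ℕ) = n - k - a.val - 1 then (if (a : ℕ) = (a' : ℕ) then (1 : ZMod 2) else 0) else 0
      split_ifs <;> first | ring1 | (exfalso; omega))]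
    rw [Finset.sum_ite_eq' Finset.univ, if_pos (Finset.mem_univ _), Matrix.one_apply]
  have h1 : ((1 : Matrix (Fin k) (Fin k) (ZMod 2))).rank = k := by
    rw [Matrix.rank_one, Fintype.card_fin]
  calc k = ((1 : Matrix (Fin k) (Fin k) (ZMod 2))).rank := h1.symm
    _ = (blkX n k hkn (revMat n) * (blkX n k hkn (revMat n))ᵀ).rank := by rw [hXXt]
    _ ≤ (blkX n k hkn (revMat n)).rank := Matrix.rank_mul_le_left _ _

lemma revY_rank (hkn : k ≤ n) (h2k : 2 * k ≤ n) :
    k ≤ (blkY n k hkn (revMat n)).rank := by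
  have hYtY : (blkY n k hkn (revMat n))ᵀ * blkY n k hkn (revMat n) = 1 := by
    ext b b'
    have hb := b.isLt
    have hb' := b'.isLt
    have ha0 : n - k - b.val - 1 < n - k := by omega
    rw [Matrix.mul_apply]
    rw [Finset.sum_congr rfl (fun a _ => show _ =
        if a = (⟨n - k - b.val - 1, ha0⟩ : Fin (n - k)) then
          (if b = b' then (1 : ZMod 2) else 0) else 0 from by
      have ha := a.isLt
      rw [Matrix.transpose_apply, blkY_rev_apply, blkY_rev_apply]
      simp only [Fin.ext_iff]
      show _ = if (a : ℕ) = n - k - b.val - 1 then (if (b : ℕ) = (b' : ℕ) then (1 : ZMod 2) else 0) else 0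
      split_ifs <;> first | ring1 | (exfalso; omega))]
    rw [Finset.sum_ite_eq' Finset.univ, if_pos (Finset.mem_univ _), Matrix.one_apply]
  have h1 : ((1 : Matrix (Fin k) (Fin k) (ZMod 2))).rank = k := by
    rw [Matrix.rank_one, Fintype.card_fin]
  calc k = ((1 : Matrix (Fin k) (Fin k) (ZMod 2))).rank := h1.symm
    _ = ((blkY n k hkn (revMat n))ᵀ * blkY n k hkn (revMat n)).rank := by rw [hYtY]
    _ ≤ ((blkY n k hkn (revMat n))ᵀ).rank := Matrix.rank_mul_le_left _ _
    _ = (blkY n k hkn (revMat n)).rank := Matrix.rank_transpose _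

lemma blkX_one (hkn : k ≤ n) (hk1 : 1 ≤ k) :
    blkX n k hkn (1 : Matrix (Fin n) (Fin n) (ZMod 2)) = 0 := by
  ext a b
  have ha := a.isLt
  simp only [blkX, Matrix.submatrix_apply, Matrix.zero_apply]
  rw [Matrix.one_apply_ne]
  simp only [ne_eq, Fin.ext_iff]
  show ¬ (a : ℕ) = k + (b : ℕ)
  omega

lemma blkY_one (hkn : k ≤ n) (hk1 : 1 ≤ k) :
    blkY n k hkn (1 : Matrix (Fin n) (Fin n) (ZMod 2)) = 0 := by
  ext a b
  have hb := b.isLt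
  simp only [blkY, Matrix.submatrix_apply, Matrix.zero_apply]
  rw [Matrix.one_apply_ne]
  simp only [ne_eq, Fin.ext_iff]
  show ¬ k + (a : ℕ) = (b : ℕ)
  omega

end RevRank

/-- any sequence of adjacent column operations turning the identity
into the reversal matrix contains, for every `k` with `1 ≤ k ≤ n/2`, at least `k`
operations adding column `k+1` into column `k` (gate `(k-1, false)`, 0-indexed)
and at least `k` operations adding column `k` into column `k+1` (gate `(k-1, true)`). -/
theorem stmt3 (n : ℕ) (L : List (ℕ × Bool)) (hvalid : ∀ g ∈ L, g.1 + 1 < n)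
    (hL : listMat n L = revMat n) (k : ℕ) (hk1 : 1 ≤ k) (hk : k ≤ n / 2) :
    k ≤ L.count (k - 1, false) ∧ k ≤ L.count (k - 1, true) := by
  have h2k : 2 * k ≤ n := by omega
  have hkn : k ≤ n := by omega
  constructor
  · have hc := chain_false hkn hk1 L 1
    rw [one_mul, hL, blkY_one hkn hk1, Matrix.rank_zero, zero_add] at hc
    exact le_trans (revY_rank hkn h2k) hc
  · have hc := chain_true hkn hk1 L 1
    rw [one_mul, hL, blkX_one hkn hk1, Matrix.rank_zero, zero_add] at hc
    exact le_trans (revX_rank hkn h2k) hc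
end

section
/- For every n ≥ 2, the reversal permutation matrix in GL_n(F_2) can be written as a product of exactly n² - 1 adjacent elementary matrices. -/
open Matrix

namespace Stmt5Aux

/-- Entry condition for partial products within a `T`-block `k` (gates `k-1` down to `j` done). -/
def Tcond (k j i c : ℕ) : Prop :=
  (i ≤ k ∧ c = k ∧ (j < k ∨ i = k)) ∨
  (i < k ∧ k ≤ i + c + 1 ∧ c < k ∧ (c ≤ j ∨ i + c + 1 = k)) ∨
  (k < i ∧ i = c)

/-- Entry condition for partial products within an `F`-block `k`. -/
def Fcond (k j i c : ℕ) : Prop :=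
  (i ≤ k ∧ i + j < k ∧ k ≤ i + c ∧ c ≤ k) ∨
  (i ≤ k ∧ k ≤ i + j ∧ (c + i + 1 = k ∨ (j ≤ c ∧ c ≤ k))) ∨
  (k < i ∧ i = c)

/-- Entry condition for partial products within the final block. -/
def Rcond (n j i c : ℕ) : Prop :=
  (i + j + 1 < n ∧ i + c + 1 = n) ∨ (n ≤ i + j + 1 ∧ n ≤ i + c + 1 ∧ c ≤ j)

instance (k j i c : ℕ) : Decidable (Tcond k j i c) := by unfold Tcond; infer_instance
instance (k j i c : ℕ) : Decidable (Fcond k j i c) := by unfold Fcond; infer_instance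
instance (n j i c : ℕ) : Decidable (Rcond n j i c) := by unfold Rcond; infer_instance

def stair (n k : ℕ) : Matrix (Fin n) (Fin n) (ZMod 2) :=
  Matrix.of fun i c =>
    if (i.1 ≤ k ∧ k ≤ i.1 + c.1 ∧ c.1 ≤ k) ∨ (k < i.1 ∧ i.1 = c.1) then 1 else 0

def TmM (n k j : ℕ) : Matrix (Fin n) (Fin n) (ZMod 2) :=
  Matrix.of fun i c => if Tcond k j i.1 c.1 then 1 else 0

def FmM (n k j : ℕ) : Matrix (Fin n) (Fin n) (ZMod 2) :=
  Matrix.of fun i c => if Fcond k j i.1 c.1 then 1 else 0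

def RmM (n j : ℕ) : Matrix (Fin n) (Fin n) (ZMod 2) :=
  Matrix.of fun i c => if Rcond n j i.1 c.1 then 1 else 0

lemma zmod_ite_add (p q r : Prop) [Decidable p] [Decidable q] [Decidable r]
    (h : r ↔ ((p ∧ ¬ q) ∨ (q ∧ ¬ p))) :
    ((if p then (1 : ZMod 2) else 0) + (if q then 1 else 0)) = if r then 1 else 0 := by
  split_ifs <;> simp_all <;> decide

lemma mul_gate_true {n : ℕ} (M : Matrix (Fin n) (Fin n) (ZMod 2)) (j : ℕ) (h : j + 1 < n) :
    M * gateMat n (j, true) =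
      Matrix.of fun i c => M i c + if c.1 = j + 1 then M i ⟨j, by omega⟩ else 0 := by
  ext i c
  simp only [gateMat, dif_pos h, if_pos, Matrix.mul_add, Matrix.mul_one, Matrix.add_apply,
    Matrix.of_apply, stdE]
  congr 1
  by_cases hc : c = (⟨j + 1, h⟩ : Fin n)
  · subst hc
    rw [Matrix.mul_single_apply_same, if_pos rfl, mul_one]
  · rw [Matrix.mul_single_apply_of_ne (hbj := hc),
      if_neg (by simpa [Fin.ext_iff] using hc)]

lemma mul_gate_false {n : ℕ} (M : Matrix (Fin n) (Fin n) (ZMod 2)) (j : ℕ) (h : j + 1 < n) :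
    M * gateMat n (j, false) =
      Matrix.of fun i c => M i c + if c.1 = j then M i ⟨j + 1, h⟩ else 0 := by
  ext i c
  simp only [gateMat, dif_pos h, Bool.false_eq_true, if_false, Matrix.mul_add, Matrix.mul_one,
    Matrix.add_apply, Matrix.of_apply, stdE]
  congr 1
  by_cases hc : c = (⟨j, by omega⟩ : Fin n)
  · subst hc
    rw [Matrix.mul_single_apply_same, if_pos rfl, mul_one]
  · rw [Matrix.mul_single_apply_of_ne (hbj := hc),
      if_neg (by simpa [Fin.ext_iff] using hc)]

lemma Tstep {n : ℕ} (k j : ℕ) (hk : k < n) (hj : j < k) :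
    TmM n k (j + 1) * gateMat n (j, true) = TmM n k j := by
  rw [mul_gate_true _ j (by omega)]
  ext i c
  have hi := i.isLt; have hcb := c.isLt
  simp only [Matrix.of_apply, TmM]
  by_cases hc : c.1 = j + 1
  · rw [if_pos hc]
    exact zmod_ite_add _ _ _ (by simp only [Tcond]; omega)
  · rw [if_neg hc, add_zero]
    exact if_congr (by simp only [Tcond]; omega) rfl rfl

lemma Fstep {n : ℕ} (k j : ℕ) (hk : k < n) (hj : j < k) :
    FmM n k (j + 1) * gateMat n (j, false) = FmM n k j := by
  rw [mul_gate_false _ j (by omega)]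
  ext i c
  have hi := i.isLt; have hcb := c.isLt
  simp only [Matrix.of_apply, FmM]
  by_cases hc : c.1 = j
  · rw [if_pos hc]
    exact zmod_ite_add _ _ _ (by simp only [Fcond]; omega)
  · rw [if_neg hc, add_zero]
    exact if_congr (by simp only [Fcond]; omega) rfl rfl

lemma Rstep {n : ℕ} (j : ℕ) (hj : j + 2 ≤ n) :
    RmM n (j + 1) * gateMat n (j, true) = RmM n j := by
  rw [mul_gate_true _ j (by omega)]
  ext i c
  have hi := i.isLt; have hcb := c.isLt
  simp only [Matrix.of_apply, RmM]
  by_cases hc : c.1 = j + 1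
  · rw [if_pos hc]
    exact zmod_ite_add _ _ _ (by simp only [Rcond]; omega)
  · rw [if_neg hc, add_zero]
    exact if_congr (by simp only [Rcond]; omega) rfl rfl

lemma stair_TmM {n : ℕ} (k : ℕ) : stair n k = TmM n (k + 1) (k + 1) := by
  ext i c
  have hi := i.isLt; have hcb := c.isLt
  exact if_congr (by simp only [Tcond]; omega) rfl rfl

lemma TmM_FmM {n : ℕ} (k : ℕ) (hk : 1 ≤ k) : TmM n k 0 = FmM n k k := by
  ext i c
  have hi := i.isLt; have hcb := c.isLt
  exact if_congr (by simp only [Tcond, Fcond]; omega) rfl rfl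

lemma FmM_stair {n : ℕ} (k : ℕ) : FmM n k 0 = stair n k := by
  ext i c
  have hi := i.isLt; have hcb := c.isLt
  exact if_congr (by simp only [Fcond]; omega) rfl rfl

lemma stair_RmM {n : ℕ} : stair n (n - 1) = RmM n (n - 1) := by
  ext i c
  have hi := i.isLt; have hcb := c.isLt
  exact if_congr (by simp only [Rcond]; omega) rfl rfl

lemma RmM_rev {n : ℕ} : RmM n 0 = revMat n := by
  ext i c
  have hi := i.isLt; have hcb := c.isLt
  simp only [RmM, revMat, Matrix.of_apply]
  exact if_congr (by simp only [Rcond]; omega) rfl rfl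

lemma stair_zero {n : ℕ} : stair n 0 = 1 := by
  ext i c
  have hi := i.isLt; have hcb := c.isLt
  rw [stair, Matrix.of_apply, Matrix.one_apply]
  exact if_congr (by rw [Fin.ext_iff]; omega) rfl rfl

/-- Gates `(j+m-1, d), …, (j+1, d), (j, d)` as a list of matrices. -/
def dseq (n : ℕ) (d : Bool) : ℕ → ℕ → List (Matrix (Fin n) (Fin n) (ZMod 2))
  | _, 0 => []
  | j, m + 1 => dseq n d (j + 1) m ++ [gateMat n (j, d)]

lemma dseq_prod {n : ℕ} (d : Bool) (j m : ℕ) :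
    (dseq n d j (m + 1)).prod = (dseq n d (j + 1) m).prod * gateMat n (j, d) := by
  simp [dseq]

lemma dseq_length {n : ℕ} (d : Bool) : ∀ m j, (dseq n d j m).length = m := by
  intro m
  induction m with
  | zero => intro j; rfl
  | succ m ih => intro j; simp [dseq, ih]

lemma gate_adj {n : ℕ} (j : ℕ) (h : j + 1 < n) (d : Bool) : IsAdjElem n (gateMat n (j, d)) := by
  refine ⟨j, h, ?_⟩
  rw [gateMat, dif_pos h]
  cases d
  · exact Or.inr rfl
  · exact Or.inl rfl

lemma dseq_mem {n : ℕ} (d : Bool) : ∀ m j, j + m < n →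
    ∀ A ∈ dseq n d j m, IsAdjElem n A := by
  intro m
  induction m with
  | zero => intro j _ A hA; simp [dseq] at hA
  | succ m ih =>
      intro j hjm A hA
      rw [dseq, List.mem_append] at hA
      rcases hA with hA | hA
      · exact ih (j + 1) (by omega) A hA
      · rw [List.mem_singleton] at hA
        subst hA
        exact gate_adj j (by omega) d

lemma Tchain {n : ℕ} (k : ℕ) (hk : k < n) : ∀ m j, j + m = k →
    TmM n k k * (dseq n true j m).prod = TmM n k j := by
  intro m
  induction m with
  | zero => intro j hj; rw [show j = k by omega]; simp [dseq]
  | succ m ih =>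
      intro j hj
      rw [dseq_prod, ← mul_assoc, ih (j + 1) (by omega), Tstep k j hk (by omega)]

lemma Fchain {n : ℕ} (k : ℕ) (hk : k < n) : ∀ m j, j + m = k →
    FmM n k k * (dseq n false j m).prod = FmM n k j := by
  intro m
  induction m with
  | zero => intro j hj; rw [show j = k by omega]; simp [dseq]
  | succ m ih =>
      intro j hj
      rw [dseq_prod, ← mul_assoc, ih (j + 1) (by omega), Fstep k j hk (by omega)]

lemma Rchain {n : ℕ} : ∀ m j, j + m = n - 1 →
    RmM n (n - 1) * (dseq n true j m).prod = RmM n j := by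
  intro m
  induction m with
  | zero => intro j hj; rw [show j = n - 1 by omega]; simp [dseq]
  | succ m ih =>
      intro j hj
      rw [dseq_prod, ← mul_assoc, ih (j + 1) (by omega), Rstep j (by omega)]

/-- The first `k` blocks `D₁ᵀ D₁ᶠ ⋯ D_kᵀ D_kᶠ`. -/
def blocks (n : ℕ) : ℕ → List (Matrix (Fin n) (Fin n) (ZMod 2))
  | 0 => []
  | k + 1 => blocks n k ++ (dseq n true 0 (k + 1) ++ dseq n false 0 (k + 1))

lemma blocks_prod {n : ℕ} : ∀ k, k < n → (blocks n k).prod = stair n k := by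
  intro k
  induction k with
  | zero => intro _; rw [blocks, List.prod_nil, stair_zero]
  | succ k ih =>
      intro hk
      rw [blocks, List.prod_append, List.prod_append, ih (by omega), ← mul_assoc,
        stair_TmM k, Tchain (k + 1) hk (k + 1) 0 (by omega), TmM_FmM (k + 1) (by omega),
        Fchain (k + 1) hk (k + 1) 0 (by omega), FmM_stair]

lemma blocks_length {n : ℕ} : ∀ k, (blocks n k).length = k * (k + 1) := by
  intro k
  induction k with
  | zero => rfl
  | succ k ih =>
      simp only [blocks, List.length_append, ih, dseq_length]
      ring

lemma blocks_mem {n : ℕ} : ∀ k, k < n → ∀ A ∈ blocks n k, IsAdjElem n A := by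
  intro k
  induction k with
  | zero => intro _ A hA; simp [blocks] at hA
  | succ k ih =>
      intro hk A hA
      rw [blocks, List.mem_append, List.mem_append] at hA
      rcases hA with hA | hA | hA
      · exact ih (by omega) A hA
      · exact dseq_mem true (k + 1) 0 (by omega) A hA
      · exact dseq_mem false (k + 1) 0 (by omega) A hA

end Stmt5Aux

/-- for `n ≥ 2`, the reversal matrix is a product of exactly
`n² - 1` adjacent elementary matrices. -/
theorem stmt5 (n : ℕ) (hn : 2 ≤ n) :
    ∃ L : List (Matrix (Fin n) (Fin n) (ZMod 2)),
      (∀ A ∈ L, IsAdjElem n A) ∧ L.length = n ^ 2 - 1 ∧ L.prod = revMat n := by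
  classical
  refine ⟨Stmt5Aux.blocks n (n - 1) ++ Stmt5Aux.dseq n true 0 (n - 1), ?_, ?_, ?_⟩
  · intro A hA
    rw [List.mem_append] at hA
    rcases hA with hA | hA
    · exact Stmt5Aux.blocks_mem (n - 1) (by omega) A hA
    · exact Stmt5Aux.dseq_mem true (n - 1) 0 (by omega) A hA
  · rw [List.length_append, Stmt5Aux.blocks_length, Stmt5Aux.dseq_length]
    obtain ⟨m, rfl⟩ : ∃ m, n = m + 2 := ⟨n - 2, by omega⟩
    have h1 : m + 2 - 1 = m + 1 := rfl
    rw [h1]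
    have h2 : (m + 2) ^ 2 = (m + 1) * (m + 1 + 1) + (m + 1) + 1 := by ring
    omega
  · rw [List.prod_append, Stmt5Aux.blocks_prod (n - 1) (by omega), Stmt5Aux.stair_RmM,
      Stmt5Aux.Rchain (n - 1) 0 (by omega), Stmt5Aux.RmM_rev]
end

section
/- For every n ≥ 3, there exists a circuit of adjacent CNOT gates on n wires of depth at most 2n + 2 computing the reversal matrix. -/
open Matrix

namespace Stmt7Aux

/-! ### The scalar invariant -/

def trilo (i σ : ℕ) : ℕ := if σ ≤ i then i - σ else σ - i - 1
def trihi (n i σ : ℕ) : ℕ := if i + σ < n then i + σ else 2 * n - 1 - (i + σ)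
def ent (n s i j : ℕ) : ZMod 2 :=
  if trilo i (min (s - i % 2) n) ≤ j ∧ j ≤ trihi n i (min (s - i % 2) n) then 1 else 0

lemma trilo_le (i σ j : ℕ) : trilo i σ ≤ j ↔ (i ≤ σ + j ∧ σ ≤ i + j + 1) := by
  unfold trilo; split_ifs <;> omega

lemma le_trihi (n i σ j : ℕ) (h : i + σ ≤ 2 * n - 1) :
    j ≤ trihi n i σ ↔ (j ≤ i + σ ∧ j + i + σ ≤ 2 * n - 1) := by
  unfold trihi; split_ifs <;> omega

lemma ind_xor (p q : Prop) [Decidable p] [Decidable q] :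
    (if Xor p q then (1 : ZMod 2) else 0) = (if p then 1 else 0) + (if q then 1 else 0) := by
  by_cases hp : p <;> by_cases hq : q <;> simp [Xor, hp, hq] <;> decide

set_option maxHeartbeats 8000000 in
lemma ent_step (n s i j : ℕ) (hs : s ≤ n) (hi : i < n) (hj : j < n) :
    ent n (s+1) i j = ent n s i j +
      (if j % 2 ≠ s % 2 then
        (if 1 ≤ j then ent n s i (j-1) else 0) +
        (if j + 1 < n then ent n s i (j+1) else 0)
      else 0) := by
  have hb : ∀ t : ℕ, i + min (t - i % 2) n ≤ 2 * n - 1 := by intro t; omega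
  have key : (trilo i (min (s+1 - i % 2) n) ≤ j ∧ j ≤ trihi n i (min (s+1 - i % 2) n)) ↔
      Xor (trilo i (min (s - i % 2) n) ≤ j ∧ j ≤ trihi n i (min (s - i % 2) n))
        (Xor (j % 2 ≠ s % 2 ∧ 1 ≤ j ∧
                (trilo i (min (s - i % 2) n) ≤ j-1 ∧ j-1 ≤ trihi n i (min (s - i % 2) n)))
              (j % 2 ≠ s % 2 ∧ j + 1 < n ∧
                (trilo i (min (s - i % 2) n) ≤ j+1 ∧ j+1 ≤ trihi n i (min (s - i % 2) n)))) := by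
    simp only [trilo_le, le_trihi _ _ _ _ (hb _), Xor]
    omega
  unfold ent
  rw [if_congr key rfl rfl, ind_xor, ind_xor]
  by_cases hg : j % 2 ≠ s % 2 <;> by_cases h1 : 1 ≤ j <;> by_cases h2 : j + 1 < n <;>
    simp [hg, h1, h2]

/-! ### Layers -/

def lp (n par : ℕ) : List ℕ := (List.range (n-1)).filter fun i => i % 2 == par

lemma mem_lp {n par a : ℕ} : a ∈ lp n par ↔ a < n - 1 ∧ a % 2 = par := by
  simp [lp, List.mem_filter, List.mem_range]

lemma pairwise_upgrade {l : List ℕ} {p : ℕ} (hmem : ∀ a ∈ l, a % 2 = p)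
    (h : l.Pairwise (· < ·)) : l.Pairwise fun a b => a + 2 ≤ b := by
  induction l with
  | nil => exact List.Pairwise.nil
  | cons a l ih =>
    rw [List.pairwise_cons] at h ⊢
    refine ⟨fun b hb => ?_, ih (fun x hx => hmem x (List.mem_cons_of_mem _ hx)) h.2⟩
    have h1 := h.1 b hb
    have h2 := hmem a List.mem_cons_self
    have h3 := hmem b (List.mem_cons_of_mem _ hb)
    omega

lemma lp_pairwise (n par : ℕ) : (lp n par).Pairwise fun a b => a + 2 ≤ b := by
  refine pairwise_upgrade (fun a ha => (mem_lp.mp ha).2) ?_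
  exact List.pairwise_lt_range.filter _

lemma lp_lt {n par : ℕ} : ∀ a ∈ lp n par, a + 1 < n := by
  intro a ha
  have := (mem_lp.mp ha).1
  omega

/-! ### Layer matrices -/

def Lt (n : ℕ) (l : List ℕ) : Matrix (Fin n) (Fin n) (ZMod 2) :=
  Matrix.of fun a b => (if (a : ℕ) = b then 1 else 0) +
    (if (a : ℕ) ∈ l ∧ (b : ℕ) = (a : ℕ) + 1 then 1 else 0)

def Lf (n : ℕ) (l : List ℕ) : Matrix (Fin n) (Fin n) (ZMod 2) :=
  Matrix.of fun a b => (if (a : ℕ) = b then 1 else 0) +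
    (if (b : ℕ) ∈ l ∧ (a : ℕ) = (b : ℕ) + 1 then 1 else 0)

lemma gateMat_true {n : ℕ} (i : ℕ) (h : i + 1 < n) :
    gateMat n (i, true) = 1 + stdE n ⟨i, by omega⟩ ⟨i+1, h⟩ := by
  simp [gateMat, h]

lemma gateMat_false {n : ℕ} (i : ℕ) (h : i + 1 < n) :
    gateMat n (i, false) = 1 + stdE n ⟨i+1, h⟩ ⟨i, by omega⟩ := by
  simp [gateMat, h]

lemma listMat_nil (n : ℕ) : listMat n [] = 1 := rfl

lemma listMat_cons (n : ℕ) (g : ℕ × Bool) (l : List (ℕ × Bool)) :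
    listMat n (g :: l) = gateMat n g * listMat n l := by
  simp [listMat]

lemma listMat_true (n : ℕ) (l : List ℕ) (h1 : ∀ a ∈ l, a + 1 < n)
    (h2 : l.Pairwise fun a b => a + 2 ≤ b) :
    listMat n (l.map fun i => (i, true)) = Lt n l := by
  induction l with
  | nil =>
    ext a b
    simp only [List.map_nil, listMat_nil, Lt, Matrix.of_apply, List.not_mem_nil, false_and,
      if_false, add_zero, Matrix.one_apply, Fin.ext_iff]
  | cons g l ih =>
    have hg : g + 1 < n := h1 g List.mem_cons_self
    have hnotin : ∀ x ∈ l, g + 2 ≤ x := (List.pairwise_cons.mp h2).1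
    have hgl : ¬ (g ∈ l) := fun h => by have := hnotin g h; omega
    have hg1l : ¬ (g + 1 ∈ l) := fun h => by have := hnotin _ h; omega
    rw [List.map_cons, listMat_cons,
      ih (fun a ha => h1 a (List.mem_cons_of_mem _ ha)) (List.pairwise_cons.mp h2).2,
      gateMat_true g hg, Matrix.add_mul, Matrix.one_mul]
    ext a b
    rw [Matrix.add_apply]
    by_cases ha : a = (⟨g, by omega⟩ : Fin n)
    · subst ha
      rw [stdE, Matrix.single_mul_apply_same, one_mul]
      simp only [Lt, Matrix.of_apply, List.mem_cons, hgl, hg1l, or_false, false_and, if_false,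
        add_zero, true_or, true_and, false_or]
      split_ifs <;> first | decide | (exfalso; omega)
    · rw [stdE, Matrix.single_mul_apply_of_ne (h := ha), add_zero]
      have hag : ¬ ((a : ℕ) = g) := fun h => ha (Fin.ext h)
      by_cases hal : (a : ℕ) ∈ l <;>
        simp only [Lt, Matrix.of_apply, List.mem_cons, hag, hal, false_or, or_true, true_and,
          false_and, if_false, add_zero]

lemma listMat_false (n : ℕ) (l : List ℕ) (h1 : ∀ a ∈ l, a + 1 < n)
    (h2 : l.Pairwise fun a b => a + 2 ≤ b) :
    listMat n (l.map fun i => (i, false)) = Lf n l := by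
  induction l with
  | nil =>
    ext a b
    simp only [List.map_nil, listMat_nil, Lf, Matrix.of_apply, List.not_mem_nil, false_and,
      if_false, add_zero, Matrix.one_apply, Fin.ext_iff]
  | cons g l ih =>
    have hg : g + 1 < n := h1 g List.mem_cons_self
    have hnotin : ∀ x ∈ l, g + 2 ≤ x := (List.pairwise_cons.mp h2).1
    have hgl : ¬ (g ∈ l) := fun h => by have := hnotin g h; omega
    rw [List.map_cons, listMat_cons,
      ih (fun a ha => h1 a (List.mem_cons_of_mem _ ha)) (List.pairwise_cons.mp h2).2,
      gateMat_false g hg, Matrix.add_mul, Matrix.one_mul]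
    ext a b
    rw [Matrix.add_apply]
    by_cases ha : a = (⟨g+1, hg⟩ : Fin n)
    · subst ha
      rw [stdE, Matrix.single_mul_apply_same, one_mul]
      by_cases hb : (b : ℕ) ∈ l
      · have hble := hnotin _ hb
        simp only [Lf, Matrix.of_apply, List.mem_cons, hb, hgl, or_true, true_and]
        split_ifs <;> first | decide | (exfalso; omega)
      · simp only [Lf, Matrix.of_apply, List.mem_cons, hb, hgl, or_false, false_and, if_false]
        split_ifs <;> first | decide | (exfalso; omega)
    · rw [stdE, Matrix.single_mul_apply_of_ne (h := ha), add_zero]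
      have hag : ¬ ((a : ℕ) = g + 1) := fun h => ha (Fin.ext h)
      by_cases hb : (b : ℕ) ∈ l <;> by_cases hbg : (b : ℕ) = g <;>
        simp only [Lf, Matrix.of_apply, List.mem_cons, hb, hbg, hag, hgl, or_true, true_or,
          false_or, or_false, true_and, and_true, false_and, and_false, if_false, add_zero] <;>
        split_ifs <;> first | rfl | decide | (exfalso; omega)


/-! ### Column action of layer matrices -/

lemma mul_Lt (n : ℕ) (l : List ℕ) (P : Matrix (Fin n) (Fin n) (ZMod 2)) (f : ℕ → ZMod 2)
    (i j : Fin n) (hf : ∀ a : Fin n, P i a = f a.1) :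
    (P * Lt n l) i j = f j.1 +
      if 1 ≤ (j : ℕ) ∧ (j : ℕ) - 1 ∈ l then f ((j : ℕ) - 1) else 0 := by
  rw [Matrix.mul_apply]
  have expand : ∀ a : Fin n, P i a * Lt n l a j =
      (if a = j then f a.1 else 0) +
      (if (1 ≤ (j : ℕ) ∧ (j : ℕ) - 1 ∈ l) ∧ (a : ℕ) = (j : ℕ) - 1 then f a.1 else 0) := by
    intro a
    rw [hf a]
    simp only [Lt, Matrix.of_apply, mul_add, mul_ite, mul_one, mul_zero]
    congr 1
    · exact if_congr (Fin.val_eq_val _ _) rfl rfl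
    · refine if_congr ?_ rfl rfl
      constructor
      · rintro ⟨h1, h2⟩
        have ha := a.isLt
        exact ⟨⟨by omega, by rwa [show (j : ℕ) - 1 = (a : ℕ) by omega]⟩, by omega⟩
      · rintro ⟨⟨hj1, hjl⟩, haj⟩
        exact ⟨by rwa [← haj] at hjl, by omega⟩
  simp_rw [expand]
  rw [Finset.sum_add_distrib]
  congr 1
  · rw [Finset.sum_ite_eq' Finset.univ j (fun a : Fin n => f a.1)]
    simp
  · by_cases hc : 1 ≤ (j : ℕ) ∧ (j : ℕ) - 1 ∈ l
    · have hlt : (j : ℕ) - 1 < n := lt_of_le_of_lt (Nat.sub_le _ _) j.isLt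
      have heq : ∀ a : Fin n,
          ((1 ≤ (j : ℕ) ∧ (j : ℕ) - 1 ∈ l) ∧ (a : ℕ) = (j : ℕ) - 1) ↔ a = ⟨(j : ℕ) - 1, hlt⟩ := by
        intro a; simp [hc, Fin.ext_iff]
      simp_rw [heq]
      rw [Finset.sum_ite_eq' Finset.univ (⟨(j : ℕ) - 1, hlt⟩ : Fin n) (fun a : Fin n => f a.1)]
      simp [hc]
    · simp [hc]

lemma mul_Lf (n : ℕ) (l : List ℕ) (P : Matrix (Fin n) (Fin n) (ZMod 2)) (f : ℕ → ZMod 2)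
    (i j : Fin n) (hf : ∀ a : Fin n, P i a = f a.1) :
    (P * Lf n l) i j = f j.1 +
      if (j : ℕ) ∈ l ∧ (j : ℕ) + 1 < n then f ((j : ℕ) + 1) else 0 := by
  rw [Matrix.mul_apply]
  have expand : ∀ a : Fin n, P i a * Lf n l a j =
      (if a = j then f a.1 else 0) +
      (if ((j : ℕ) ∈ l ∧ (j : ℕ) + 1 < n) ∧ (a : ℕ) = (j : ℕ) + 1 then f a.1 else 0) := by
    intro a
    rw [hf a]
    simp only [Lf, Matrix.of_apply, mul_add, mul_ite, mul_one, mul_zero]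
    congr 1
    · exact if_congr (Fin.val_eq_val _ _) rfl rfl
    · refine if_congr ?_ rfl rfl
      constructor
      · rintro ⟨h1, h2⟩
        have ha := a.isLt
        exact ⟨⟨h1, by omega⟩, h2⟩
      · rintro ⟨⟨hjl, hj1⟩, haj⟩
        exact ⟨hjl, haj⟩
  simp_rw [expand]
  rw [Finset.sum_add_distrib]
  congr 1
  · rw [Finset.sum_ite_eq' Finset.univ j (fun a : Fin n => f a.1)]
    simp
  · by_cases hc : (j : ℕ) ∈ l ∧ (j : ℕ) + 1 < n
    · have hlt : (j : ℕ) + 1 < n := hc.2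
      have heq : ∀ a : Fin n,
          (((j : ℕ) ∈ l ∧ (j : ℕ) + 1 < n) ∧ (a : ℕ) = (j : ℕ) + 1) ↔ a = ⟨(j : ℕ) + 1, hlt⟩ := by
        intro a; simp [hc, Fin.ext_iff]
      simp_rw [heq]
      rw [Finset.sum_ite_eq' Finset.univ (⟨(j : ℕ) + 1, hlt⟩ : Fin n) (fun a : Fin n => f a.1)]
      simp [hc]
    · simp [hc]

/-! ### The invariant matrices -/

def Qm (n s : ℕ) : Matrix (Fin n) (Fin n) (ZMod 2) :=
  Matrix.of fun i j => ent n s i.1 j.1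

lemma Qstep_even (n s : ℕ) (hs : s ≤ n) (hpar : s % 2 = 0) :
    Qm n s * Lt n (lp n 0) * Lf n (lp n 1) = Qm n (s+1) := by
  ext i j
  have h1 : ∀ a : Fin n, (Qm n s * Lt n (lp n 0)) i a =
      (fun c => ent n s i.1 c +
        if 1 ≤ c ∧ c - 1 ∈ lp n 0 then ent n s i.1 (c - 1) else 0) a.1 := by
    intro a
    exact mul_Lt n (lp n 0) (Qm n s) (fun c => ent n s i.1 c) i a (fun a' => rfl)
  rw [mul_Lf n (lp n 1) _
      (fun c => ent n s i.1 c + if 1 ≤ c ∧ c - 1 ∈ lp n 0 then ent n s i.1 (c - 1) else 0) i j h1]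
  show _ = ent n (s+1) i.1 j.1
  rw [ent_step n s i.1 j.1 hs i.isLt j.isLt]
  simp only [mem_lp, Nat.add_sub_cancel]
  have hj := j.isLt
  split_ifs <;> first | ring1 | (exfalso; omega)

lemma Qstep_odd (n s : ℕ) (hs : s ≤ n) (hpar : s % 2 = 1) :
    Qm n s * Lf n (lp n 0) * Lt n (lp n 1) = Qm n (s+1) := by
  ext i j
  have h1 : ∀ a : Fin n, (Qm n s * Lf n (lp n 0)) i a =
      (fun c => ent n s i.1 c +
        if c ∈ lp n 0 ∧ c + 1 < n then ent n s i.1 (c + 1) else 0) a.1 := by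
    intro a
    exact mul_Lf n (lp n 0) (Qm n s) (fun c => ent n s i.1 c) i a (fun a' => rfl)
  rw [mul_Lt n (lp n 1) _
      (fun c => ent n s i.1 c + if c ∈ lp n 0 ∧ c + 1 < n then ent n s i.1 (c + 1) else 0) i j h1]
  show _ = ent n (s+1) i.1 j.1
  rw [ent_step n s i.1 j.1 hs i.isLt j.isLt]
  simp only [mem_lp, Nat.add_sub_cancel]
  have hj := j.isLt
  split_ifs <;> first | ring1 | (exfalso; omega)

/-! ### The circuit -/

def sliceL (n k : ℕ) : List (ℕ × Bool) :=
  (lp n (k % 2)).map fun i => (i, decide (k % 4 = 0 ∨ k % 4 = 3))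

def circ (n : ℕ) : List (List (ℕ × Bool)) := (List.range (2*n+2)).map (sliceL n)

lemma prefix_eq (n : ℕ) (s : ℕ) (hs : s ≤ n + 1) :
    ((List.range (2*s)).map fun k => listMat n (sliceL n k)).prod = Qm n s := by
  induction s with
  | zero =>
    ext i j
    simp only [Nat.mul_zero, List.range_zero, List.map_nil, List.prod_nil, Qm, Matrix.of_apply]
    unfold ent trilo trihi
    have hi := i.isLt
    rw [Matrix.one_apply]
    split_ifs <;> first | rfl | (exfalso; simp only [Fin.ext_iff] at *; omega)
  | succ s ih =>
    rw [show 2*(s+1) = (2*s+1)+1 by ring, List.range_succ, List.range_succ,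
      List.map_append, List.map_append, List.prod_append, List.prod_append,
      List.map_singleton, List.map_singleton, List.prod_singleton, List.prod_singleton,
      ih (by omega)]
    have hsn : s ≤ n := by omega
    rcases Nat.mod_two_eq_zero_or_one s with hpar | hpar
    · have e0 : (2*s) % 2 = 0 := by omega
      have e1 : (2*s) % 4 = 0 := by omega
      have f0 : (2*s+1) % 2 = 1 := by omega
      have f1 : (2*s+1) % 4 = 1 := by omega
      rw [show sliceL n (2*s) = (lp n 0).map (fun i => (i, true)) by
            simp [sliceL, e0, e1],
          show sliceL n (2*s+1) = (lp n 1).map (fun i => (i, false)) by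
            simp [sliceL, f0, f1],
          listMat_true n _ lp_lt (lp_pairwise n 0),
          listMat_false n _ lp_lt (lp_pairwise n 1)]
      exact Qstep_even n s hsn hpar
    · have e0 : (2*s) % 2 = 0 := by omega
      have e1 : (2*s) % 4 = 2 := by omega
      have f0 : (2*s+1) % 2 = 1 := by omega
      have f1 : (2*s+1) % 4 = 3 := by omega
      rw [show sliceL n (2*s) = (lp n 0).map (fun i => (i, false)) by
            simp [sliceL, e0, e1],
          show sliceL n (2*s+1) = (lp n 1).map (fun i => (i, true)) by
            simp [sliceL, f0, f1],
          listMat_false n _ lp_lt (lp_pairwise n 0),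
          listMat_true n _ lp_lt (lp_pairwise n 1)]
      exact Qstep_odd n s hsn hpar

lemma Qm_final (n : ℕ) : Qm n (n+1) = revMat n := by
  ext i j
  have hi := i.isLt
  have hj := j.isLt
  show ent n (n+1) i.1 j.1 = _
  unfold ent trilo trihi
  have hmin : min (n + 1 - i.1 % 2) n = n := by omega
  rw [hmin]
  simp only [revMat, Matrix.of_apply]
  split_ifs <;> first | rfl | (exfalso; omega)

end Stmt7Aux


/-- for `n ≥ 3`, there is a circuit of depth at most `2n + 2`
computing the reversal matrix. -/
theorem stmt7 (n : ℕ) (hn : 3 ≤ n) :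
    ∃ C : List (List (ℕ × Bool)),
      ValidCircuit n C ∧ C.length ≤ 2 * n + 2 ∧ circuitMat n C = revMat n := by
  refine ⟨Stmt7Aux.circ n, ?_, ?_, ?_⟩
  · intro s hs
    simp only [Stmt7Aux.circ, List.mem_map] at hs
    obtain ⟨k, -, rfl⟩ := hs
    constructor
    · intro g hg
      simp only [Stmt7Aux.sliceL, List.mem_map] at hg
      obtain ⟨a, ha, rfl⟩ := hg
      exact Stmt7Aux.lp_lt a ha
    · exact List.Pairwise.map _ (fun a b h => Or.inl h) (Stmt7Aux.lp_pairwise n _)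
  · simp [Stmt7Aux.circ]
  · unfold circuitMat Stmt7Aux.circ
    rw [List.map_map]
    have h := Stmt7Aux.prefix_eq n (n+1) (le_refl _)
    rw [show 2*(n+1) = 2*n+2 by ring] at h
    rw [show ((List.range (2*n+2)).map (listMat n ∘ Stmt7Aux.sliceL n)) =
        ((List.range (2*n+2)).map fun k => listMat n (Stmt7Aux.sliceL n k)) from rfl, h,
      Stmt7Aux.Qm_final]
end

section
/- For every permutation σ of {1,…,n}, there exists a circuit of adjacent CNOT gates on n wires of depth at most 3n computing the permutation matrix of σ over F_2. -/
open Matrix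

/-- The permutation matrix of `σ`: entries `1` exactly where `σ j = i`. -/
def permMat (n : ℕ) (σ : Equiv.Perm (Fin n)) : Matrix (Fin n) (Fin n) (ZMod 2) :=
  Matrix.of fun i j => if σ j = i then 1 else 0

namespace Stmt8Aux

variable (n : ℕ) (σ : Equiv.Perm (Fin n))

/-- initial value vector: `σ` on `[0,n)`, identity beyond. -/
def vInit : ℕ → ℕ := fun i => if h : i < n then (σ ⟨i, h⟩ : ℕ) else i

/-- one comparator round with phase `t`. -/
def cstep (t : ℕ) (v : ℕ → ℕ) : ℕ → ℕ := fun i =>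
  if i % 2 = t % 2 then min (v i) (v (i + 1)) else max (v (i - 1)) (v i)

/-- iterated rounds. -/
def vIt : ℕ → ℕ → ℕ
  | 0 => vInit n σ
  | t + 1 => cstep t (vIt t)

lemma vInit_pad {i : ℕ} (h : n ≤ i) : vInit n σ i = i := by
  simp [vInit, Nat.not_lt.2 h]

lemma vInit_lt {i : ℕ} (h : i < n) : vInit n σ i < n := by
  simp only [vInit, dif_pos h]
  exact (σ ⟨i, h⟩).isLt

lemma vIt_pad : ∀ t, (∀ i, n ≤ i → vIt n σ t i = i) ∧ (∀ i, i < n → vIt n σ t i < n) := by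
  intro t
  induction t with
  | zero => exact ⟨fun i h => vInit_pad n σ h, fun i h => vInit_lt n σ h⟩
  | succ t ih =>
    obtain ⟨hpad, hlt⟩ := ih
    constructor
    · intro i hi
      show cstep t (vIt n σ t) i = i
      unfold cstep
      split
      · rw [hpad i hi, hpad (i+1) (by omega)]; omega
      · rcases Nat.eq_or_lt_of_le hi with h | h
        · -- i = n
          rw [hpad i hi]
          rcases Nat.eq_zero_or_pos n with hn | hn
          · have := hpad (i-1) (by omega); omega
          · have : vIt n σ t (i-1) < n := hlt (i-1) (by omega)
            omega
        · rw [hpad i hi, hpad (i-1) (by omega)]; omega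
    · intro i hi
      show cstep t (vIt n σ t) i < n
      unfold cstep
      split
      · have := hlt i hi; omega
      · have h1 := hlt i hi
        have h2 : vIt n σ t (i-1) < n := hlt (i-1) (by omega)
        omega

/-- the swap function realized by round `t`. -/
def tau (t : ℕ) : ℕ → ℕ := fun i =>
  if i % 2 = t % 2 ∧ i + 1 < n ∧ vIt n σ t (i+1) < vIt n σ t i then i + 1
  else if 1 ≤ i ∧ (i-1) % 2 = t % 2 ∧ i < n ∧ vIt n σ t i < vIt n σ t (i-1) then i - 1
  else i

/-- descent implies in-range (thanks to padding). -/
lemma descent_range {t i : ℕ} (h : vIt n σ t (i+1) < vIt n σ t i) : i + 1 < n := by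
  by_contra hc
  push_neg at hc
  rcases Nat.lt_or_ge i n with hi | hi
  · have h1 : vIt n σ t (i+1) = i + 1 := (vIt_pad n σ t).1 _ hc
    have h2 : vIt n σ t i < n := (vIt_pad n σ t).2 _ hi
    omega
  · have h1 : vIt n σ t (i+1) = i + 1 := (vIt_pad n σ t).1 _ (by omega)
    have h2 : vIt n σ t i = i := (vIt_pad n σ t).1 _ hi
    omega

lemma vIt_succ (t i : ℕ) : vIt n σ (t+1) i = vIt n σ t (tau n σ t i) := by
  show cstep t (vIt n σ t) i = _
  unfold cstep tau
  by_cases hp : i % 2 = t % 2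
  · rw [if_pos hp]
    by_cases hd : vIt n σ t (i+1) < vIt n σ t i
    · have hr : i + 1 < n := descent_range n σ hd
      rw [if_pos ⟨hp, hr, hd⟩]
      omega
    · have : ¬ (i % 2 = t % 2 ∧ i + 1 < n ∧ vIt n σ t (i+1) < vIt n σ t i) := by tauto
      rw [if_neg this]
      have : ¬ (1 ≤ i ∧ (i-1) % 2 = t % 2 ∧ i < n ∧ vIt n σ t i < vIt n σ t (i-1)) := by
        rintro ⟨h1, h2, -⟩; omega
      rw [if_neg this]
      omega
  · rw [if_neg hp]
    have hb1 : ¬ (i % 2 = t % 2 ∧ i + 1 < n ∧ vIt n σ t (i+1) < vIt n σ t i) := by tauto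
    rw [if_neg hb1]
    rcases Nat.eq_zero_or_pos i with hi0 | hi0
    · subst hi0
      have : ¬ (1 ≤ 0 ∧ (0-1) % 2 = t % 2 ∧ 0 < n ∧ vIt n σ t 0 < vIt n σ t (0-1)) := by
        rintro ⟨h1, -⟩; omega
      rw [if_neg this]
      simp
    · by_cases hd : vIt n σ t i < vIt n σ t (i-1)
      · have hr : i < n := by
          have := descent_range n σ (i := i - 1) (by
            have : i - 1 + 1 = i := by omega
            rw [this]; exact hd)
          omega
        rw [if_pos ⟨hi0, by omega, hr, hd⟩]
        omega
      · have : ¬ (1 ≤ i ∧ (i-1) % 2 = t % 2 ∧ i < n ∧ vIt n σ t i < vIt n σ t (i-1)) := by tauto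
        rw [if_neg this]
        omega

lemma tau_lt {t i : ℕ} (h : i < n) : tau n σ t i < n := by
  unfold tau
  split
  · next h1 => omega
  · split <;> omega

lemma tau_invol (t : ℕ) : Function.Involutive (tau n σ t) := by
  intro i
  unfold tau
  by_cases h1 : i % 2 = t % 2 ∧ i + 1 < n ∧ vIt n σ t (i+1) < vIt n σ t i
  · rw [if_pos h1]
    have hb1 : ¬ ((i+1) % 2 = t % 2 ∧ i + 1 + 1 < n ∧ vIt n σ t (i+1+1) < vIt n σ t (i+1)) := by
      rintro ⟨hp, -⟩; omega
    rw [if_neg hb1]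
    have : (1 ≤ i + 1 ∧ (i+1-1) % 2 = t % 2 ∧ i + 1 < n ∧ vIt n σ t (i+1) < vIt n σ t (i+1-1)) := by
      refine ⟨by omega, ?_, h1.2.1, ?_⟩
      · simpa using h1.1
      · simpa using h1.2.2
    rw [if_pos this]
    omega
  · rw [if_neg h1]
    by_cases h2 : 1 ≤ i ∧ (i-1) % 2 = t % 2 ∧ i < n ∧ vIt n σ t i < vIt n σ t (i-1)
    · rw [if_pos h2]
      have : ((i-1) % 2 = t % 2 ∧ (i-1) + 1 < n ∧ vIt n σ t ((i-1)+1) < vIt n σ t (i-1)) := by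
        have hi : i - 1 + 1 = i := by omega
        exact ⟨h2.2.1, by omega, by rw [hi]; exact h2.2.2.2⟩
      rw [if_pos this]
      omega
    · rw [if_neg h2, if_neg h1, if_neg h2]


/-! ### Threshold dynamics -/

/-- positions with value `< θ` at time `t`. -/
abbrev SS (θ t x : ℕ) : Prop := vIt n σ t x < θ

/-- whether the zero at position `x` moves left at step `t → t+1`. -/
abbrev mov (θ t x : ℕ) : Prop := 1 ≤ x ∧ (x-1) % 2 = t % 2 ∧ ¬ SS n σ θ t (x-1)

/-- movement map on zero positions. -/
def mu (θ t x : ℕ) : ℕ := if mov n σ θ t x then x - 1 else x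

lemma mu_le (θ t x : ℕ) : mu n σ θ t x ≤ x := by
  unfold mu; split <;> omega

lemma step_mem (θ t x : ℕ) :
    SS n σ θ (t+1) x ↔ ∃ y, SS n σ θ t y ∧ mu n σ θ t y = x := by
  have hstep : vIt n σ (t+1) x = cstep t (vIt n σ t) x := rfl
  by_cases hp : x % 2 = t % 2
  · have : SS n σ θ (t+1) x ↔ SS n σ θ t x ∨ SS n σ θ t (x+1) := by
      show vIt n σ (t+1) x < θ ↔ _
      rw [hstep]; unfold cstep; rw [if_pos hp]
      exact min_lt_iff
    rw [this]
    constructor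
    · rintro (h | h)
      · refine ⟨x, h, ?_⟩
        unfold mu
        rw [if_neg]
        rintro ⟨h1, h2, -⟩; omega
      · by_cases hx : SS n σ θ t x
        · refine ⟨x, hx, ?_⟩
          unfold mu
          rw [if_neg]
          rintro ⟨h1, h2, -⟩; omega
        · refine ⟨x+1, h, ?_⟩
          unfold mu
          rw [if_pos ⟨by omega, by simpa using hp, by simpa using hx⟩]
          omega
    · rintro ⟨y, hy, hmu⟩
      unfold mu at hmu
      split at hmu
      · next hm =>
        right
        have : y = x + 1 := by omega
        subst this; exact hy
      · left; rwa [hmu] at hy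
  · rcases Nat.eq_zero_or_pos x with hx0 | hx0
    · subst hx0
      have : SS n σ θ (t+1) 0 ↔ SS n σ θ t 0 := by
        show vIt n σ (t+1) 0 < θ ↔ _
        rw [hstep]; unfold cstep; rw [if_neg hp]
        simp
      rw [this]
      constructor
      · intro h
        refine ⟨0, h, ?_⟩
        unfold mu
        rw [if_neg]; rintro ⟨h1, -⟩; omega
      · rintro ⟨y, hy, hmu⟩
        unfold mu at hmu
        split at hmu
        · next hm =>
          obtain ⟨h1, h2, -⟩ := hm
          omega
        · rwa [hmu] at hy
    · have : SS n σ θ (t+1) x ↔ SS n σ θ t (x-1) ∧ SS n σ θ t x := by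
        show vIt n σ (t+1) x < θ ↔ _
        rw [hstep]; unfold cstep; rw [if_neg hp]
        exact max_lt_iff
      rw [this]
      constructor
      · rintro ⟨h1, h2⟩
        refine ⟨x, h2, ?_⟩
        unfold mu
        rw [if_neg]
        rintro ⟨-, -, h3⟩; exact h3 h1
      · rintro ⟨y, hy, hmu⟩
        unfold mu at hmu
        split at hmu
        · next hm => omega
        · subst hmu
          refine ⟨?_, hy⟩
          by_contra hc
          -- then mov holds, contradiction with the split
          next hm => exact hm ⟨hx0, by omega, hc⟩
      
/-- initial zero set. -/
def FF (θ : ℕ) : Finset ℕ := (Finset.range n).filter fun i => vInit n σ i < θ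

/-- number of zeros. -/
def kk (θ : ℕ) : ℕ := (FF n σ θ).card

/-- trajectories of the zeros. -/
def ZZ (θ : ℕ) : ℕ → Fin (kk n σ θ) → ℕ
  | 0 => fun j => (FF n σ θ).orderEmbOfFin rfl j
  | t + 1 => fun j => mu n σ θ t (ZZ θ t j)

lemma ZZ_zero_mem (θ : ℕ) (j : Fin (kk n σ θ)) : ZZ n σ θ 0 j ∈ FF n σ θ :=
  Finset.orderEmbOfFin_mem _ _ _

lemma ZZ_zero_lt (θ : ℕ) (j : Fin (kk n σ θ)) : ZZ n σ θ 0 j < n := by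
  have := ZZ_zero_mem n σ θ j
  simp only [FF, Finset.mem_filter, Finset.mem_range] at this
  exact this.1

lemma ZZ_main (θ : ℕ) (hθ : θ ≤ n) :
    ∀ t, StrictMono (ZZ n σ θ t) ∧ (∀ x, SS n σ θ t x ↔ ∃ j, ZZ n σ θ t j = x) := by
  intro t
  induction t with
  | zero =>
    constructor
    · exact ((FF n σ θ).orderEmbOfFin rfl).strictMono
    · intro x
      have h1 : SS n σ θ 0 x ↔ x ∈ FF n σ θ := by
        simp only [FF, Finset.mem_filter, Finset.mem_range]
        constructor
        · intro h
          refine ⟨?_, h⟩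
          by_contra hc
          have : vInit n σ x = x := vInit_pad n σ (by omega)
          have : vIt n σ 0 x = x := this
          omega
        · exact fun h => h.2
      rw [h1]
      have := Finset.range_orderEmbOfFin (FF n σ θ) (rfl : (FF n σ θ).card = kk n σ θ)
      constructor
      · intro hx
        have : x ∈ Set.range ((FF n σ θ).orderEmbOfFin rfl) := by rw [this]; exact hx
        obtain ⟨j, hj⟩ := this
        exact ⟨j, hj⟩
      · rintro ⟨j, rfl⟩
        exact ZZ_zero_mem n σ θ j
  | succ t ih =>
    obtain ⟨hsm, hmem⟩ := ih
    constructor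
    · intro j j' hjj'
      show mu n σ θ t (ZZ n σ θ t j) < mu n σ θ t (ZZ n σ θ t j')
      have hlt : ZZ n σ θ t j < ZZ n σ θ t j' := hsm hjj'
      set x := ZZ n σ θ t j with hx
      set y := ZZ n σ θ t j' with hy
      have h1 : mu n σ θ t x ≤ x := mu_le ..
      by_cases hmy : mov n σ θ t y
      · have hSx : SS n σ θ t x := (hmem x).2 ⟨j, rfl⟩
        have hxy : x ≠ y - 1 := fun hc => hmy.2.2 (hc ▸ hSx)
        have h2 : mu n σ θ t y = y - 1 := by unfold mu; rw [if_pos hmy]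
        have h3 : 1 ≤ y := hmy.1
        omega
      · have h2 : mu n σ θ t y = y := by unfold mu; rw [if_neg hmy]
        omega
    · intro x
      rw [step_mem]
      constructor
      · rintro ⟨y, hy, hmu⟩
        obtain ⟨j, hj⟩ := (hmem y).1 hy
        exact ⟨j, by show mu n σ θ t _ = x; rw [hj]; exact hmu⟩
      · rintro ⟨j, hj⟩
        exact ⟨ZZ n σ θ t j, (hmem _).2 ⟨j, rfl⟩, hj⟩

lemma strictMono_gap {k : ℕ} (f : Fin k → ℕ) (hf : StrictMono f) :
    ∀ (d : ℕ) (a b : Fin k), (a : ℕ) + d = (b : ℕ) → f a + d ≤ f b := by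
  intro d
  induction d with
  | zero =>
    intro a b h
    have : a = b := Fin.ext (by omega)
    subst this; omega
  | succ d ihd =>
    intro a b h
    have hb : (b : ℕ) ≥ 1 := by omega
    have hblt : (b : ℕ) - 1 < k := by omega
    have h1 := ihd a ⟨(b : ℕ) - 1, hblt⟩ (by simp; omega)
    have h2 : f ⟨(b : ℕ) - 1, hblt⟩ < f b := hf (by simp [Fin.lt_def]; omega)
    omega

lemma inv_main (θ : ℕ) (hθ : θ ≤ n) :
    ∀ t (j : Fin (kk n σ θ)),
      (ZZ n σ θ t j ≤ (j : ℕ) ∨ ZZ n σ θ t j + t ≤ ZZ n σ θ 0 j + (j : ℕ) + 1) ∧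
      ((j : ℕ) < ZZ n σ θ t j ∧ ZZ n σ θ t j + t = ZZ n σ θ 0 j + (j : ℕ) + 1 →
        ZZ n σ θ t j % 2 = (t + 1) % 2) := by
  intro t
  induction t with
  | zero =>
    intro j
    refine ⟨Or.inr (by omega), ?_⟩
    rintro ⟨h1, h2⟩; omega
  | succ t ih =>
    intro j
    obtain ⟨hsm, hmem⟩ := ZZ_main n σ θ hθ t
    set x := ZZ n σ θ t j with hxdef
    have hstep : ZZ n σ θ (t+1) j = mu n σ θ t x := rfl
    have hgap : ∀ (j' : Fin (kk n σ θ)), (j' : ℕ) < (j : ℕ) →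
        ZZ n σ θ 0 j' + ((j : ℕ) - (j' : ℕ)) ≤ ZZ n σ θ 0 j := by
      intro j' hj'
      exact strictMono_gap _ ((ZZ_main n σ θ hθ 0).1) _ j' j (by omega)
    -- blocker analysis: if x > j and SS t (x-1) then constraints on the blocker
    have hblock : ∀ (hxj : (j : ℕ) < x) (hS : SS n σ θ t (x-1)),
        ∃ j' : Fin (kk n σ θ), (j' : ℕ) < (j : ℕ) ∧ ZZ n σ θ t j' = x - 1 := by
      intro hxj hS
      obtain ⟨j', hj'⟩ := (hmem (x-1)).1 hS
      have : ZZ n σ θ t j' < x := by omega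
      have hj'j : j' < j := by
        by_contra hc
        push_neg at hc
        have := hsm.le_iff_le.2 hc
        omega
      exact ⟨j', hj'j, hj'⟩
    constructor
    · -- the bound
      rcases (ih j).1 with hle | hbd
      · left
        have := mu_le n σ θ t x
        omega
      · by_cases htight : x + t = ZZ n σ θ 0 j + (j : ℕ) + 1
        · by_cases hxj : (j : ℕ) < x
          · -- tight and not arrived: must move
            have hpar := (ih j).2 ⟨hxj, htight⟩
            have hnS : ¬ SS n σ θ t (x-1) := by
              intro hS
              obtain ⟨j', hj'j, hj'⟩ := hblock hxj hS
              rcases (ih j').1 with h1 | h1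
              · omega
              · have := hgap j' hj'j
                omega
            have hmv : mov n σ θ t x := ⟨by omega, by omega, hnS⟩
            right
            rw [hstep]
            unfold mu
            rw [if_pos hmv]
            omega
          · left
            rw [hstep]
            have := mu_le n σ θ t x
            omega
        · right
          rw [hstep]
          have := mu_le n σ θ t x
          omega
    · -- parity clause at t+1
      rintro ⟨hgt', htight'⟩
      rw [hstep] at hgt' htight' ⊢
      by_cases hmv : mov n σ θ t x
      · -- moved
        unfold mu at hgt' htight' ⊢
        rw [if_pos hmv] at hgt' htight' ⊢
        obtain ⟨h1, h2, -⟩ := hmv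
        omega
      · unfold mu at hgt' htight' ⊢
        rw [if_neg hmv] at hgt' htight' ⊢
        -- didn't move; x + (t+1) = Z0 j + j + 1, so x + t = Z0 j + j
        have hx1 : 1 ≤ x := by omega
        by_cases hp : (x - 1) % 2 = t % 2
        · -- parity matched, so it must be blocked: SS t (x-1)
          have hS : SS n σ θ t (x-1) := by
            by_contra hc
            exact hmv ⟨hx1, hp, hc⟩
          obtain ⟨j', hj'j, hj'⟩ := hblock hgt' hS
          rcases (ih j').1 with h1 | h1
          · omega
          · -- forced: j' = j - 1 and blocker tight at t
            have hg := hgap j' hj'j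
            have hforced : (j' : ℕ) < ZZ n σ θ t j' ∧
                ZZ n σ θ t j' + t = ZZ n σ θ 0 j' + (j' : ℕ) + 1 := by
              constructor <;> omega
            have hpar' := (ih j').2 hforced
            omega
        · omega

lemma ZZ_final (θ : ℕ) (hθ : θ ≤ n) (j : Fin (kk n σ θ)) : ZZ n σ θ n j = (j : ℕ) := by
  have h1 : ZZ n σ θ n j ≤ (j : ℕ) := by
    rcases (inv_main n σ θ hθ n j).1 with h | h
    · exact h
    · have := ZZ_zero_lt n σ θ j
      omega
  have h2 : (j : ℕ) ≤ ZZ n σ θ n j := by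
    have hpos : 0 < kk n σ θ := by omega
    have := strictMono_gap _ ((ZZ_main n σ θ hθ n).1) (j : ℕ) ⟨0, hpos⟩ j (by simp)
    omega
  omega

lemma final_seg (θ : ℕ) (hθ : θ ≤ n) (x : ℕ) : SS n σ θ n x ↔ x < kk n σ θ := by
  rw [(ZZ_main n σ θ hθ n).2 x]
  constructor
  · rintro ⟨j, hj⟩
    rw [ZZ_final n σ θ hθ j] at hj
    omega
  · intro hx
    exact ⟨⟨x, hx⟩, ZZ_final n σ θ hθ ⟨x, hx⟩⟩

lemma sorted_adj (i : ℕ) (hi : i + 1 < n) : vIt n σ n i ≤ vIt n σ n (i+1) := by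
  by_contra hc
  push_neg at hc
  set θ := vIt n σ n i with hθdef
  have hθ : θ ≤ n := le_of_lt ((vIt_pad n σ n).2 i (by omega))
  have h1 : SS n σ θ n (i+1) := hc
  have h2 : ¬ SS n σ θ n i := by simp [SS]; exact le_of_eq hθdef
  rw [final_seg n σ θ hθ] at h1
  rw [final_seg n σ θ hθ] at h2
  omega

/-- composite of the swap rounds. -/
def tcomp : ℕ → ℕ → ℕ
  | 0 => id
  | t + 1 => fun i => tcomp t (tau n σ t i)

lemma vIt_eq_comp : ∀ t i, vIt n σ t i = vInit n σ (tcomp n σ t i) := by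
  intro t
  induction t with
  | zero => intro i; rfl
  | succ t ih =>
    intro i
    rw [vIt_succ, ih]
    rfl

lemma tcomp_lt : ∀ t {i}, i < n → tcomp n σ t i < n := by
  intro t
  induction t with
  | zero => intro i h; exact h
  | succ t ih => intro i h; exact ih (tau_lt n σ h)

lemma tcomp_inj : ∀ t, Function.Injective (tcomp n σ t) := by
  intro t
  induction t with
  | zero => exact fun a b h => h
  | succ t ih =>
    intro a b h
    exact (tau_invol n σ t).injective (ih h)

lemma vInit_inj : Function.Injective (vInit n σ) := by
  intro a b h
  unfold vInit at h
  by_cases ha : a < n <;> by_cases hb : b < n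
  · rw [dif_pos ha, dif_pos hb] at h
    have : (⟨a, ha⟩ : Fin n) = ⟨b, hb⟩ := σ.injective (Fin.ext h)
    simpa [Fin.ext_iff] using this
  · rw [dif_pos ha, dif_neg hb] at h
    have : ((σ ⟨a, ha⟩ : Fin n) : ℕ) < n := (σ _).isLt
    omega
  · rw [dif_neg ha, dif_pos hb] at h
    have : ((σ ⟨b, hb⟩ : Fin n) : ℕ) < n := (σ _).isLt
    omega
  · rw [dif_neg ha, dif_neg hb] at h
    exact h

lemma vIt_inj (t : ℕ) : Function.Injective (vIt n σ t) := by
  intro a b h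
  rw [vIt_eq_comp, vIt_eq_comp] at h
  exact tcomp_inj n σ t (vInit_inj n σ h)

lemma vIt_final : ∀ i, i < n → vIt n σ n i = i := by
  set f := vIt n σ n with hf
  have hadj : ∀ i, i + 1 < n → f i < f (i+1) := by
    intro i hi
    have h1 : f i ≤ f (i+1) := sorted_adj n σ i hi
    have h2 : f i ≠ f (i+1) := fun hc => by
      have : i = i + 1 := vIt_inj n σ n hc
      omega
    omega
  have hup : ∀ d i, i + d < n → f i + d ≤ f (i + d) := by
    intro d
    induction d with
    | zero => intro i h; simp
    | succ d ihd =>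
      intro i h
      have h1 := ihd i (by omega)
      have h2 := hadj (i + d) (by omega)
      have h3 : i + (d+1) = i + d + 1 := by omega
      rw [h3]
      omega
  intro i hi
  have hge : i ≤ f i := by
    have h := hup i 0 (by omega)
    simp only [Nat.zero_add] at h
    omega
  have hle : f i ≤ i := by
    have h1 := hup (n - 1 - i) i (by omega)
    have h2 : f (i + (n - 1 - i)) < n := (vIt_pad n σ n).2 _ (by omega)
    omega
  omega


/-! ### Matrix algebra -/

lemma permMat_one : permMat n 1 = 1 := by
  ext i j
  simp [permMat, Matrix.one_apply, eq_comm]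

lemma permMat_mul (p q : Equiv.Perm (Fin n)) :
    permMat n (p * q) = permMat n p * permMat n q := by
  ext i j
  rw [Matrix.mul_apply, Finset.sum_eq_single (q j)]
  · simp [permMat, Equiv.Perm.mul_apply]
    split_ifs with h <;> simp [h]
  · intro k _ hk
    have : ¬ (q j = k) := fun h => hk h.symm
    simp [permMat, this]
  · intro h; exact absurd (Finset.mem_univ _) h

lemma matrix_add_self (A : Matrix (Fin n) (Fin n) (ZMod 2)) : A + A = 0 := by
  ext i j
  simp only [Matrix.add_apply, Matrix.zero_apply]
  exact (by decide : ∀ x : ZMod 2, x + x = 0) _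

lemma stdE_mul_same (a b c : Fin n) : stdE n a b * stdE n b c = stdE n a c := by
  unfold stdE
  rw [Matrix.single_mul_single_same, one_mul]

lemma stdE_mul_ne {b c : Fin n} (a d : Fin n) (h : b ≠ c) : stdE n a b * stdE n c d = 0 := by
  unfold stdE
  exact Matrix.single_mul_single_of_ne (c := (1 : ZMod 2)) a b c h 1

lemma triple_mul (a b : Fin n) (hab : a ≠ b) :
    (1 + stdE n a b) * (1 + stdE n b a) * (1 + stdE n a b) =
      1 + stdE n a a + stdE n b b + stdE n a b + stdE n b a := by
  set E := stdE n a b with hE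
  set F := stdE n b a with hF
  have hEE : E * E = 0 := stdE_mul_ne n a b (Ne.symm hab)
  have hEF : E * F = stdE n a a := stdE_mul_same n a b a
  have hFE : F * E = stdE n b b := stdE_mul_same n b a b
  have hEFE : E * F * E = E := by rw [hEF, hE, stdE_mul_same]
  calc (1 + E) * (1 + F) * (1 + E)
      = 1 + (E + E) + F + E*E + F*E + E*F + E*F*E := by noncomm_ring
    _ = 1 + 0 + F + 0 + F*E + E*F + E := by rw [matrix_add_self, hEE, hEFE]
    _ = 1 + stdE n a a + stdE n b b + E + F := by rw [hFE, hEF]; abel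
    _ = 1 + stdE n a a + stdE n b b + stdE n a b + stdE n b a := rfl

lemma permMat_swap (a b : Fin n) (hab : a ≠ b) :
    permMat n (Equiv.swap a b) =
      1 + stdE n a a + stdE n b b + stdE n a b + stdE n b a := by
  ext i j
  simp only [permMat, Matrix.of_apply, Matrix.add_apply, Matrix.one_apply, stdE,
    Matrix.single, Matrix.of_apply, Equiv.swap_apply_def]
  by_cases hja : j = a <;> by_cases hjb : j = b <;> by_cases hia : i = a <;> by_cases hib : i = b <;>
    simp_all <;> first
      | rfl
      | (try simp_all [eq_comm]) <;> (try decide) <;> omega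

lemma one_add_comm (a b c d : Fin n) (h1 : b ≠ c) (h2 : d ≠ a) :
    Commute (1 + stdE n a b) (1 + stdE n c d) := by
  have hbc : stdE n a b * stdE n c d = 0 := stdE_mul_ne n a d h1
  have hda : stdE n c d * stdE n a b = 0 := stdE_mul_ne n c b h2
  show _ * _ = _ * _
  calc (1 + stdE n a b) * (1 + stdE n c d)
      = 1 + stdE n a b + stdE n c d + stdE n a b * stdE n c d := by noncomm_ring
    _ = 1 + stdE n c d + stdE n a b + stdE n c d * stdE n a b := by rw [hbc, hda]; abel
    _ = (1 + stdE n c d) * (1 + stdE n a b) := by noncomm_ring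

lemma gateMat_pos_t {i : ℕ} (h : i + 1 < n) :
    gateMat n (i, true) = 1 + stdE n ⟨i, by omega⟩ ⟨i+1, h⟩ := by
  simp [gateMat, h]

lemma gateMat_pos_f {i : ℕ} (h : i + 1 < n) :
    gateMat n (i, false) = 1 + stdE n ⟨i+1, h⟩ ⟨i, by omega⟩ := by
  simp [gateMat, h]

lemma gateMat_neg {i : ℕ} (b : Bool) (h : ¬ (i + 1 < n)) : gateMat n (i, b) = 1 := by
  simp [gateMat, h]

lemma gate_commute (g g' : ℕ × Bool) (h : g.1 + 2 ≤ g'.1 ∨ g'.1 + 2 ≤ g.1) :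
    Commute (gateMat n g) (gateMat n g') := by
  obtain ⟨i, b⟩ := g
  obtain ⟨i', b'⟩ := g'
  simp only at h
  by_cases h1 : i + 1 < n
  · by_cases h2 : i' + 1 < n
    · cases b <;> cases b'
      · rw [gateMat_pos_f n h1, gateMat_pos_f n h2]
        apply one_add_comm <;> (simp only [ne_eq, Fin.mk.injEq]; omega)
      · rw [gateMat_pos_f n h1, gateMat_pos_t n h2]
        apply one_add_comm <;> (simp only [ne_eq, Fin.mk.injEq]; omega)
      · rw [gateMat_pos_t n h1, gateMat_pos_f n h2]
        apply one_add_comm <;> (simp only [ne_eq, Fin.mk.injEq]; omega)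
      · rw [gateMat_pos_t n h1, gateMat_pos_t n h2]
        apply one_add_comm <;> (simp only [ne_eq, Fin.mk.injEq]; omega)
    · rw [gateMat_neg n b' h2]; exact Commute.one_right _
  · rw [gateMat_neg n b h1]; exact Commute.one_left _

/-- product of gates of one kind over a position list. -/
def prodG (b : Bool) (l : List ℕ) : Matrix (Fin n) (Fin n) (ZMod 2) :=
  (l.map (fun i => gateMat n (i, b))).prod

lemma prodG_nil (b : Bool) : prodG n b [] = 1 := rfl

lemma prodG_cons (b : Bool) (i : ℕ) (l : List ℕ) :
    prodG n b (i :: l) = gateMat n (i, b) * prodG n b l := by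
  simp [prodG]

def gatePerm (i : ℕ) : Equiv.Perm (Fin n) :=
  if h : i + 1 < n then Equiv.swap ⟨i, by omega⟩ ⟨i+1, h⟩ else 1

def plist (l : List ℕ) : Equiv.Perm (Fin n) := (l.map (gatePerm n)).prod

lemma plist_nil : plist n [] = 1 := rfl

lemma plist_cons (i : ℕ) (l : List ℕ) :
    plist n (i :: l) = gatePerm n i * plist n l := by simp [plist]

lemma gate_triple (i : ℕ) (h : i + 1 < n) :
    gateMat n (i, true) * gateMat n (i, false) * gateMat n (i, true) =
      permMat n (gatePerm n i) := by
  have e1 : gateMat n (i, true) = 1 + stdE n ⟨i, by omega⟩ ⟨i+1, h⟩ := by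
    simp [gateMat, h]
  have e2 : gateMat n (i, false) = 1 + stdE n ⟨i+1, h⟩ ⟨i, by omega⟩ := by
    simp [gateMat, h]
  have hne : (⟨i, by omega⟩ : Fin n) ≠ ⟨i+1, h⟩ := by
    simp only [ne_eq, Fin.mk.injEq]; omega
  rw [e1, e2, triple_mul n _ _ hne, gatePerm, dif_pos h, permMat_swap n _ _ hne]

lemma commute_prodG (g : ℕ × Bool) (b : Bool) (l : List ℕ)
    (h : ∀ m ∈ l, g.1 + 2 ≤ m ∨ m + 2 ≤ g.1) :
    Commute (gateMat n g) (prodG n b l) := by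
  apply Commute.list_prod_right
  intro x hx
  obtain ⟨m, hm, rfl⟩ := List.mem_map.1 hx
  exact gate_commute n g (m, b) (h m hm)

lemma bigG : ∀ (l : List ℕ), (∀ i ∈ l, i + 1 < n) →
    l.Pairwise (fun a b => a + 2 ≤ b ∨ b + 2 ≤ a) →
    prodG n true l * prodG n false l * prodG n true l = permMat n (plist n l) := by
  intro l
  induction l with
  | nil => intro _ _; simp [prodG_nil, plist_nil, permMat_one]
  | cons i l ih =>
    intro hr hp
    rw [List.pairwise_cons] at hp
    obtain ⟨hsep, hp'⟩ := hp
    have hr' : ∀ m ∈ l, m + 1 < n := fun m hm => hr m (List.mem_cons_of_mem _ hm)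
    have hIH := ih hr' hp'
    set X := gateMat n (i, true) with hX
    set Y := gateMat n (i, false) with hY
    set A := prodG n true l with hA
    set B := prodG n false l with hB
    have cXA : Commute X A := commute_prodG n (i, true) true l hsep
    have cXB : Commute X B := commute_prodG n (i, true) false l hsep
    have cYA : Commute Y A := commute_prodG n (i, false) true l hsep
    have sAY : ∀ M, A * (Y * M) = Y * (A * M) := by
      intro M; rw [← mul_assoc, ← cYA.eq, mul_assoc]
    have sAX : ∀ M, A * (X * M) = X * (A * M) := by
      intro M; rw [← mul_assoc, ← cXA.eq, mul_assoc]
    have sBX : ∀ M, B * (X * M) = X * (B * M) := by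
      intro M; rw [← mul_assoc, ← cXB.eq, mul_assoc]
    rw [prodG_cons, prodG_cons, plist_cons, permMat_mul, ← hIH,
      ← gate_triple n i (hr i (List.mem_cons_self))]
    rw [← hX, ← hY, ← hA, ← hB]
    simp only [mul_assoc]
    rw [sAY, sBX, sAX]

lemma gatePerm_left (i : ℕ) (h : i + 1 < n) :
    gatePerm n i ⟨i, by omega⟩ = ⟨i+1, h⟩ := by
  rw [gatePerm, dif_pos h]; exact Equiv.swap_apply_left _ _

lemma gatePerm_right (i : ℕ) (h : i + 1 < n) :
    gatePerm n i ⟨i+1, h⟩ = ⟨i, by omega⟩ := by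
  rw [gatePerm, dif_pos h]; exact Equiv.swap_apply_right _ _

lemma gatePerm_other (i : ℕ) (j : Fin n) (h1 : (j : ℕ) ≠ i) (h2 : (j : ℕ) ≠ i + 1) :
    gatePerm n i j = j := by
  rw [gatePerm]
  split
  · apply Equiv.swap_apply_of_ne_of_ne <;> (simp only [ne_eq, Fin.ext_iff] <;> simpa)
  · rfl

lemma plist_apply₁ : ∀ (l : List ℕ), l.Pairwise (fun a b => a + 2 ≤ b ∨ b + 2 ≤ a) →
    ∀ (j : Fin n), (j : ℕ) ∉ l → (∀ m ∈ l, m + 1 ≠ (j : ℕ)) → plist n l j = j := by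
  intro l
  induction l with
  | nil => intro _ j _ _; rfl
  | cons i l ih =>
    intro hp j h1 h2
    rw [List.pairwise_cons] at hp
    rw [plist_cons, Equiv.Perm.mul_apply,
      ih hp.2 j (fun hc => h1 (List.mem_cons_of_mem _ hc))
        (fun m hm => h2 m (List.mem_cons_of_mem _ hm))]
    exact gatePerm_other n i j (fun hc => h1 (hc ▸ List.mem_cons_self))
      (fun hc => h2 i (List.mem_cons_self) hc.symm)

lemma plist_apply₂ : ∀ (l : List ℕ), (∀ i ∈ l, i + 1 < n) →
    l.Pairwise (fun a b => a + 2 ≤ b ∨ b + 2 ≤ a) →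
    ∀ (j : Fin n), (j : ℕ) ∈ l → ((plist n l j : Fin n) : ℕ) = (j : ℕ) + 1 := by
  intro l
  induction l with
  | nil => intro _ _ j h; cases h
  | cons i l ih =>
    intro hr hp j hj
    rw [List.pairwise_cons] at hp
    rw [plist_cons, Equiv.Perm.mul_apply]
    rcases List.mem_cons.1 hj with hji | hjl
    · -- j = i
      have h1 : (j : ℕ) ∉ l := by
        intro hc
        rcases hp.1 _ hc with h | h <;> omega
      have h2 : ∀ m ∈ l, m + 1 ≠ (j : ℕ) := by
        intro m hm hc
        rcases hp.1 _ hm with h | h <;> omega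
      rw [plist_apply₁ n l hp.2 j h1 h2]
      have hrange : i + 1 < n := hr i (List.mem_cons_self)
      have : j = (⟨i, by omega⟩ : Fin n) := Fin.ext hji
      rw [this, gatePerm_left n i hrange]
    · have hval := ih (fun m hm => hr m (List.mem_cons_of_mem _ hm)) hp.2 j hjl
      have hsep := hp.1 _ hjl
      have h1 : ((plist n l j : Fin n) : ℕ) ≠ i := by omega
      have h2 : ((plist n l j : Fin n) : ℕ) ≠ i + 1 := by omega
      rw [gatePerm_other n i _ h1 h2, hval]

lemma plist_apply₃ : ∀ (l : List ℕ), (∀ i ∈ l, i + 1 < n) →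
    l.Pairwise (fun a b => a + 2 ≤ b ∨ b + 2 ≤ a) →
    ∀ (j : Fin n) (m : ℕ), m ∈ l → m + 1 = (j : ℕ) →
      ((plist n l j : Fin n) : ℕ) = (j : ℕ) - 1 := by
  intro l
  induction l with
  | nil => intro _ _ _ m h; cases h
  | cons i l ih =>
    intro hr hp j m hm hmj
    rw [List.pairwise_cons] at hp
    rw [plist_cons, Equiv.Perm.mul_apply]
    rcases List.mem_cons.1 hm with hmi | hml
    · -- m = i, j = i + 1
      subst hmi
      have h1 : (j : ℕ) ∉ l := by
        intro hc
        rcases hp.1 _ hc with h | h <;> omega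
      have h2 : ∀ m' ∈ l, m' + 1 ≠ (j : ℕ) := by
        intro m' hm' hc
        rcases hp.1 _ hm' with h | h <;> omega
      rw [plist_apply₁ n l hp.2 j h1 h2]
      have hrange : m + 1 < n := hr m (List.mem_cons_self)
      have : j = (⟨m + 1, by omega⟩ : Fin n) := Fin.ext hmj.symm
      rw [this, gatePerm_right n m hrange]
      simp
    · have hval := ih (fun m' hm' => hr m' (List.mem_cons_of_mem _ hm')) hp.2 j m hml hmj
      have hsep := hp.1 _ hml
      have h1 : ((plist n l j : Fin n) : ℕ) ≠ i := by omega
      have h2 : ((plist n l j : Fin n) : ℕ) ≠ i + 1 := by omega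
      rw [gatePerm_other n i _ h1 h2, hval]

/-! ### Layers and the circuit -/

def layer (t : ℕ) : List ℕ :=
  (List.range (n-1)).filter fun i => decide (i % 2 = t % 2 ∧ vIt n σ t (i+1) < vIt n σ t i)

lemma mem_layer {t i : ℕ} :
    i ∈ layer n σ t ↔ i < n - 1 ∧ i % 2 = t % 2 ∧ vIt n σ t (i+1) < vIt n σ t i := by
  simp [layer, List.mem_filter, List.mem_range, decide_eq_true_iff, and_assoc]

lemma layer_sep (t : ℕ) : (layer n σ t).Pairwise (fun a b => a + 2 ≤ b ∨ b + 2 ≤ a) := by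
  have h1 : (layer n σ t).Pairwise (· < ·) :=
    List.Pairwise.sublist (List.filter_sublist) List.pairwise_lt_range
  refine h1.imp_of_mem ?_
  intro a b ha hb hab
  have hpa := ((mem_layer n σ).1 ha).2.1
  have hpb := ((mem_layer n σ).1 hb).2.1
  left; omega

lemma layer_range {t i : ℕ} (h : i ∈ layer n σ t) : i + 1 < n := by
  have := ((mem_layer n σ).1 h).1
  omega

def tauF (t : ℕ) : Fin n → Fin n := fun j => ⟨tau n σ t j, tau_lt n σ j.isLt⟩

lemma tauF_invol (t : ℕ) : Function.Involutive (tauF n σ t) := by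
  intro j
  exact Fin.ext (tau_invol n σ t j)

def tauPerm (t : ℕ) : Equiv.Perm (Fin n) :=
  Function.Involutive.toPerm _ (tauF_invol n σ t)

lemma tauPerm_apply (t : ℕ) (j : Fin n) : tauPerm n σ t j = tauF n σ t j := rfl

lemma tauPerm_inv (t : ℕ) : (tauPerm n σ t)⁻¹ = tauPerm n σ t := by
  have h : tauPerm n σ t * tauPerm n σ t = 1 := by
    apply Equiv.ext
    intro j
    rw [Equiv.Perm.mul_apply, tauPerm_apply, tauPerm_apply]
    exact tauF_invol n σ t j
  exact (eq_inv_of_mul_eq_one_left h).symm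

lemma plist_layer (t : ℕ) : plist n (layer n σ t) = tauPerm n σ t := by
  apply Equiv.ext
  intro j
  apply Fin.ext
  show ((plist n (layer n σ t) j : Fin n) : ℕ) = tau n σ t (j : ℕ)
  unfold tau
  by_cases hb1 : (j:ℕ) % 2 = t % 2 ∧ (j:ℕ) + 1 < n ∧ vIt n σ t ((j:ℕ)+1) < vIt n σ t (j:ℕ)
  · rw [if_pos hb1]
    exact plist_apply₂ n _ (fun i hi => layer_range n σ hi) (layer_sep n σ t) j
      ((mem_layer n σ).2 ⟨by omega, hb1.1, hb1.2.2⟩)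
  · rw [if_neg hb1]
    by_cases hb2 : 1 ≤ (j:ℕ) ∧ ((j:ℕ)-1) % 2 = t % 2 ∧ (j:ℕ) < n ∧
        vIt n σ t (j:ℕ) < vIt n σ t ((j:ℕ)-1)
    · rw [if_pos hb2]
      have he : (j:ℕ) - 1 + 1 = (j:ℕ) := by omega
      refine plist_apply₃ n _ (fun i hi => layer_range n σ hi) (layer_sep n σ t) j ((j:ℕ)-1)
        ((mem_layer n σ).2 ⟨by omega, hb2.2.1, ?_⟩) he
      rw [he]
      exact hb2.2.2.2
    · rw [if_neg hb2]
      apply congrArg Fin.val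
      apply plist_apply₁ n _ (layer_sep n σ t) j
      · intro hc
        obtain ⟨hc1, hc2, hc3⟩ := (mem_layer n σ).1 hc
        exact hb1 ⟨hc2, by omega, hc3⟩
      · intro m hm hc
        obtain ⟨hc1, hc2, hc3⟩ := (mem_layer n σ).1 hm
        refine hb2 ⟨by omega, ?_, j.isLt, ?_⟩
        · rw [show (j:ℕ) - 1 = m by omega]; exact hc2
        · have e1 : (j:ℕ) - 1 = m := by omega
          rw [e1, ← hc]
          exact hc3

def PP : ℕ → Equiv.Perm (Fin n)
  | 0 => 1
  | t + 1 => tauPerm n σ t * PP t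

def QQ : ℕ → Equiv.Perm (Fin n)
  | 0 => 1
  | t + 1 => QQ t * tauPerm n σ t

lemma QQ_apply : ∀ t (j : Fin n), ((QQ n σ t j : Fin n) : ℕ) = tcomp n σ t (j : ℕ) := by
  intro t
  induction t with
  | zero => intro j; rfl
  | succ t ih =>
    intro j
    show ((QQ n σ t (tauPerm n σ t j) : Fin n) : ℕ) = tcomp n σ t (tau n σ t (j:ℕ))
    rw [ih (tauPerm n σ t j)]
    rfl

lemma PP_eq_QQinv : ∀ t, PP n σ t = (QQ n σ t)⁻¹ := by
  intro t
  induction t with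
  | zero => simp [PP, QQ]
  | succ t ih =>
    show tauPerm n σ t * PP n σ t = (QQ n σ t * tauPerm n σ t)⁻¹
    rw [_root_.mul_inv_rev, tauPerm_inv, ih]

lemma QQ_eq : QQ n σ n = σ⁻¹ := by
  apply Equiv.ext
  intro j
  have h1 : ((QQ n σ n j : Fin n) : ℕ) = tcomp n σ n (j:ℕ) := QQ_apply n σ n j
  have hlt : tcomp n σ n (j:ℕ) < n := tcomp_lt n σ n j.isLt
  have h3 : vInit n σ (tcomp n σ n (j:ℕ)) = (j:ℕ) := by
    rw [← vIt_eq_comp]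
    exact vIt_final n σ (j:ℕ) j.isLt
  rw [vInit, dif_pos hlt] at h3
  have h4 : QQ n σ n j = ⟨tcomp n σ n (j:ℕ), hlt⟩ := Fin.ext h1
  have h2 : σ (QQ n σ n j) = j := by
    rw [h4]
    exact Fin.ext h3
  calc QQ n σ n j = σ⁻¹ (σ (QQ n σ n j)) := (σ.symm_apply_apply _).symm
    _ = σ⁻¹ j := by rw [h2]

lemma sigma_eq_PP : σ = PP n σ n := by
  rw [PP_eq_QQinv, QQ_eq, inv_inv]

def sliceL (t : ℕ) (b : Bool) : List (ℕ × Bool) := (layer n σ t).map (fun i => (i, b))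

def circ : ℕ → List (List (ℕ × Bool))
  | 0 => []
  | t + 1 => sliceL n σ t true :: sliceL n σ t false :: sliceL n σ t true :: circ t

lemma listMat_sliceL (t : ℕ) (b : Bool) :
    listMat n (sliceL n σ t b) = prodG n b (layer n σ t) := by
  simp [listMat, sliceL, prodG, List.map_map, Function.comp_def]

lemma sliceL_valid (t : ℕ) (b : Bool) : ValidSlice n (sliceL n σ t b) := by
  constructor
  · intro g hg
    obtain ⟨i, hi, rfl⟩ := List.mem_map.1 hg
    exact layer_range n σ hi
  · rw [sliceL, List.pairwise_map]
    exact layer_sep n σ t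

lemma circ_valid : ∀ T, ValidCircuit n (circ n σ T) := by
  intro T
  induction T with
  | zero => intro s hs; cases hs
  | succ T ih =>
    intro s hs
    rcases hs with _ | ⟨_, hs⟩
    · exact sliceL_valid n σ T true
    rcases hs with _ | ⟨_, hs⟩
    · exact sliceL_valid n σ T false
    rcases hs with _ | ⟨_, hs⟩
    · exact sliceL_valid n σ T true
    exact ih s hs

lemma circ_length : ∀ T, (circ n σ T).length = 3 * T := by
  intro T
  induction T with
  | zero => rfl
  | succ T ih => simp only [circ, List.length_cons, ih]; omega

lemma circ_mat : ∀ T, circuitMat n (circ n σ T) = permMat n (PP n σ T) := by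
  intro T
  induction T with
  | zero =>
    show (1 : Matrix (Fin n) (Fin n) (ZMod 2)) = permMat n (PP n σ 0)
    rw [show PP n σ 0 = 1 from rfl, permMat_one]
  | succ T ih =>
    show listMat n (sliceL n σ T true) *
        (listMat n (sliceL n σ T false) *
          (listMat n (sliceL n σ T true) * circuitMat n (circ n σ T))) = _
    rw [listMat_sliceL, listMat_sliceL, ih]
    have hG := bigG n (layer n σ T) (fun i hi => layer_range n σ hi) (layer_sep n σ T)
    rw [plist_layer] at hG
    show _ = permMat n (tauPerm n σ T * PP n σ T)
    rw [permMat_mul, ← hG]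
    simp only [mul_assoc]

end Stmt8Aux


/-- every permutation matrix can be computed by a circuit of
depth at most `3n`. -/
theorem stmt8 (n : ℕ) (σ : Equiv.Perm (Fin n)) :
    ∃ C : List (List (ℕ × Bool)),
      ValidCircuit n C ∧ C.length ≤ 3 * n ∧ circuitMat n C = permMat n σ := by
  refine ⟨Stmt8Aux.circ n σ n, Stmt8Aux.circ_valid n σ n, ?_, ?_⟩
  · rw [Stmt8Aux.circ_length]
  · rw [Stmt8Aux.circ_mat]
    exact congrArg (permMat n) (Stmt8Aux.sigma_eq_PP n σ).symm
end

section
/- The odd-even transposition sorting network on n wires sorts every input: applying n alternating rounds — odd rounds conditionally swapping positions (2j-1, 2j) and even rounds conditionally swapping positions (2j, 2j+1), where each conditional swap exchanges two adjacent entries if they are out of order — transforms any list of n distinct values into sorted order. -/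
/-- One round of the odd–even transposition network on positions `0, …, n-1`:
for each `i` with `i % 2 = t % 2` and `i + 1 < n`, conditionally swap
positions `i` and `i + 1` (placing the min at `i` and the max at `i + 1`). -/
def oeStep {α : Type*} [LinearOrder α] (n t : ℕ) (v : ℕ → α) : ℕ → α := fun i =>
  if i % 2 = t % 2 then (if i + 1 < n then min (v i) (v (i + 1)) else v i)
  else if 1 ≤ i ∧ i < n then max (v (i - 1)) (v i) else v i

/-- Apply the first `t` rounds of the odd–even transposition network. -/
def oeRun {α : Type*} [LinearOrder α] (n : ℕ) : ℕ → (ℕ → α) → ℕ → α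
  | 0, v => v
  | t + 1, v => oeStep n t (oeRun n t v)

/-- A conditional swap (comparator) on adjacent positions `i` and `i + 1`. -/
def cswap {α : Type*} [LinearOrder α] (i : ℕ) (v : ℕ → α) : ℕ → α := fun j =>
  if j = i then min (v i) (v (i + 1))
  else if j = i + 1 then max (v i) (v (i + 1))
  else v j

/-- Run a comparator network, given as the list of its comparator positions. -/
def runNet {α : Type*} [LinearOrder α] (L : List ℕ) (v : ℕ → α) : ℕ → α :=
  L.foldl (fun w i => cswap i w) v

/-- The input sequence corresponding to a permutation of `{0, …, n-1}`. -/
def permInput (n : ℕ) (σ : Equiv.Perm (Fin n)) : ℕ → ℕ :=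
  fun j => if h : j < n then (σ ⟨j, h⟩ : ℕ) else j

/-!
By the zero-one principle (the network commutes with monotone maps, and thresholding at an
output value is monotone) it suffices to sort Boolean sequences. There the `k`-th zero (counting
from the left, from `0`) is at position at most `n + k - t` after `t` rounds and, from round `k`
on, sits in the upper slot of a comparator whenever it is not yet home, so after `n` rounds it
is at position `k`.
-/

section Evaluation

variable {α : Type*} [LinearOrder α] {n t i : ℕ} (v : ℕ → α)

theorem oeStep_of_mod_eq (h : i % 2 = t % 2) (hi : i + 1 < n) :
    oeStep n t v i = min (v i) (v (i + 1)) := by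
  simp [oeStep, h, hi]

theorem oeStep_of_mod_eq_of_le (h : i % 2 = t % 2) (hi : n ≤ i + 1) : oeStep n t v i = v i := by
  simp [oeStep, h, Nat.not_lt.mpr hi]

theorem oeStep_succ_of_mod_eq (h : i % 2 = t % 2) (hi : i + 1 < n) :
    oeStep n t v (i + 1) = max (v i) (v (i + 1)) := by
  have h' : (i + 1) % 2 ≠ t % 2 := by omega
  simp [oeStep, h', hi]

theorem oeStep_of_le (hi : n ≤ i) : oeStep n t v i = v i := by
  simp [oeStep, show ¬ i + 1 < n by omega, show ¬ i < n by omega]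

end Evaluation

section ZeroOne

variable {α β : Type*} [LinearOrder α] [LinearOrder β] {f : α → β}

theorem oeStep_comp (hf : Monotone f) (n t : ℕ) (v : ℕ → α) :
    oeStep n t (f ∘ v) = f ∘ oeStep n t v := by
  funext i
  simp only [oeStep, Function.comp_apply]
  split_ifs <;> simp [hf.map_min, hf.map_max]

theorem oeRun_comp (hf : Monotone f) (n : ℕ) (v : ℕ → α) :
    ∀ t, oeRun n t (f ∘ v) = f ∘ oeRun n t v
  | 0 => rfl
  | t + 1 => by rw [oeRun, oeRun, oeRun_comp hf n v t, oeStep_comp hf]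

theorem monotoneOn_oeRun_of_bool {n t : ℕ}
    (h : ∀ w : ℕ → Bool, MonotoneOn (oeRun n t w) (Set.Iio n)) (v : ℕ → α) :
    MonotoneOn (oeRun n t v) (Set.Iio n) := by
  intro i hi j hj hij
  have hf : Monotone fun x => decide (oeRun n t v i ≤ x) := fun a b hab h =>
    decide_eq_true ((of_decide_eq_true h).trans hab)
  have := h ((fun x => decide (oeRun n t v i ≤ x)) ∘ v) hi hj hij
  rw [oeRun_comp hf] at this
  exact of_decide_eq_true (this (decide_eq_true le_rfl))

end ZeroOne

section Boolean

variable {n t : ℕ}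

theorem count_oeStep_of_mod_eq (w : ℕ → Bool) :
    ∀ p, p % 2 = t % 2 →
      Nat.count (fun i => oeStep n t w i = false) p = Nat.count (fun i => w i = false) p
  | 0, _ => rfl
  | 1, h => by
    have h0 : oeStep n t w 0 = w 0 := by simp [oeStep, show 0 % 2 ≠ t % 2 by omega]
    simp [Nat.count_succ, h0]
  | q + 2, h => by
    have hq : q % 2 = t % 2 := by omega
    simp only [Nat.count_succ, count_oeStep_of_mod_eq w q hq]
    rcases lt_or_ge (q + 1) n with hn | hn
    · rw [oeStep_of_mod_eq w hq hn, oeStep_succ_of_mod_eq w hq hn]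
      cases w q <;> cases w (q + 1) <;> simp
    · rw [oeStep_of_mod_eq_of_le w hq hn, oeStep_of_le w hn]

/-- The zero at `p` is the `k`-th one, `k` the number of zeros left of `p`; `p % 2 ≠ t % 2` says
that round `t` puts `p` in the upper slot of a comparator. -/
def ZerosOnSchedule (n t : ℕ) (w : ℕ → Bool) : Prop :=
  ∀ p < n, w p = false →
    Nat.count (fun i => w i = false) p = p ∨
      (p + t ≤ n + Nat.count (fun i => w i = false) p ∧
        (Nat.count (fun i => w i = false) p < t → p % 2 ≠ t % 2))

theorem zerosOnSchedule_zero (w : ℕ → Bool) : ZerosOnSchedule n 0 w :=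
  fun _ hp _ => Or.inr ⟨by omega, by omega⟩

theorem zerosOnSchedule_succ {w : ℕ → Bool} (hw : ZerosOnSchedule n t w) :
    ZerosOnSchedule n (t + 1) (oeStep n t w) := by
  intro p hp hzero
  by_cases hpar : p % 2 = t % 2
  · rw [count_oeStep_of_mod_eq w p hpar]
    have hle := Nat.count_le (fun i => w i = false) (n := p)
    by_cases hwp : w p = false
    · have := hw p hp hwp
      omega
    · -- the zero came down from `p + 1`
      have hn : p + 1 < n := by
        by_contra hn
        rw [oeStep_of_mod_eq_of_le w hpar (by omega)] at hzero
        exact hwp hzero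
      rw [oeStep_of_mod_eq w hpar hn] at hzero
      have hwp1 : w (p + 1) = false := by simp_all
      have hcount :
          Nat.count (fun i => w i = false) (p + 1) = Nat.count (fun i => w i = false) p := by
        simp [Nat.count_succ, hwp]
      have := hw (p + 1) hn hwp1
      rw [hcount] at this
      omega
  · obtain _ | q := p
    · exact Or.inl rfl
    · -- both inputs of the comparator `(q, q + 1)` were zeros
      have hq : q % 2 = t % 2 := by omega
      rw [oeStep_succ_of_mod_eq w hq hp] at hzero
      obtain ⟨hwq, -⟩ : w q = false ∧ w (q + 1) = false := by simpa using hzero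
      have hnew : oeStep n t w q = false := by
        rw [oeStep_of_mod_eq w hq hp, hwq]
        rfl
      rw [Nat.count_succ, count_oeStep_of_mod_eq w q hq, if_pos hnew]
      have := hw q (by omega) hwq
      omega

theorem zerosOnSchedule_oeRun (w : ℕ → Bool) : ∀ t, ZerosOnSchedule n t (oeRun n t w)
  | 0 => zerosOnSchedule_zero w
  | t + 1 => zerosOnSchedule_succ (zerosOnSchedule_oeRun w t)

theorem ZerosOnSchedule.monotoneOn {w : ℕ → Bool} (hw : ZerosOnSchedule n n w) :
    MonotoneOn w (Set.Iio n) := by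
  intro i _ j hj hij
  rcases hij.lt_or_eq with hlt | rfl
  · cases hwj : w j
    · have hc : Nat.count (fun i => w i = false) j = j := by
        have := hw j hj hwj
        have := Nat.count_le (fun i => w i = false) (n := j)
        omega
      simp [Nat.count_iff_forall.mp hc i hlt]
    · exact le_top
  · exact le_rfl

end Boolean

theorem stmt9_general {α : Type*} [LinearOrder α] (n : ℕ) (v : ℕ → α) :
    ∀ i j, i < j → j < n → oeRun n n v i ≤ oeRun n n v j := fun _ _ hij hjn =>
  monotoneOn_oeRun_of_bool (fun w => (zerosOnSchedule_oeRun w n).monotoneOn) v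
    (hij.trans hjn) hjn hij.le

/-- the odd–even transposition network sorts: after `n` alternating
rounds, any sequence of `n` distinct values is in sorted order. -/
theorem stmt9 {α : Type*} [LinearOrder α] (n : ℕ) (v : ℕ → α)
    (hdist : ∀ i j, i < n → j < n → v i = v j → i = j) :
    ∀ i j, i < j → j < n → oeRun n n v i ≤ oeRun n n v j :=
  stmt9_general n v
end

section
/- Any sorting network on n > 2 wires consisting only of adjacent conditional swaps, organized into time-slices of disjoint comparators, has depth at least n. -/
/- ### Auxiliary lemmas -/

lemma cswap_map (f : ℕ → ℕ) (hf : Monotone f) (i : ℕ) (v : ℕ → ℕ) :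
    cswap i (f ∘ v) = f ∘ cswap i v := by
  funext j
  simp only [cswap, Function.comp]
  split_ifs with h1 h2
  · exact (hf.map_min).symm
  · exact (hf.map_max).symm
  · rfl

lemma runNet_map (f : ℕ → ℕ) (hf : Monotone f) (L : List ℕ) (v : ℕ → ℕ) :
    runNet L (f ∘ v) = f ∘ runNet L v := by
  induction L generalizing v with
  | nil => rfl
  | cons i L ih =>
    simp only [runNet, List.foldl_cons] at *
    rw [cswap_map f hf, ih]

lemma runNet_flatten (C : List (List ℕ)) (v : ℕ → ℕ) :
    runNet C.flatten v = C.foldl (fun w s => runNet s w) v := by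
  simp only [runNet, List.foldl_flatten]

/-- single-one atomic step -/
lemma cswap_ind1 {n i p : ℕ} (hi : i + 1 < n) (hp : p < n) (w : ℕ → ℕ)
    (hw : ∀ j, j < n → w j = if j = p then 1 else 0) :
    ∀ j, j < n → cswap i w j = if j = (if i = p then p + 1 else p) then 1 else 0 := by
  intro j hj
  simp only [cswap]
  rw [hw i (by omega), hw (i+1) hi]
  by_cases hji : j = i
  · subst hji; simp only [if_pos rfl]; split_ifs <;> omega
  · rw [if_neg hji]
    by_cases hji1 : j = i + 1
    · subst hji1; simp only [if_pos rfl]; split_ifs <;> omega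
    · rw [if_neg hji1, hw j hj]; split_ifs <;> omega

/-- two-ones atomic step -/
lemma cswap_ind2 {n i p q : ℕ} (hi : i + 1 < n) (hpq : p < q) (hq : q < n) (w : ℕ → ℕ)
    (hw : ∀ j, j < n → w j = if j = p ∨ j = q then 1 else 0) :
    ∀ j, j < n → cswap i w j =
      if (j = (if i = p ∧ i + 1 ≠ q then p + 1 else p)) ∨ (j = if i = q then q + 1 else q)
      then 1 else 0 := by
  intro j hj
  simp only [cswap]
  rw [hw i (by omega), hw (i+1) hi]
  by_cases hji : j = i
  · subst hji; simp only [if_pos rfl]; split_ifs <;> omega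
  · rw [if_neg hji]
    by_cases hji1 : j = i + 1
    · subst hji1; simp only [if_pos rfl]; split_ifs <;> omega
    · rw [if_neg hji1, hw j hj]; split_ifs <;> omega

/-- single-one slice lemma -/
lemma slice1 {n : ℕ} : ∀ (s : List ℕ), (∀ i ∈ s, i + 1 < n) →
    s.Pairwise (fun i i' => i + 2 ≤ i' ∨ i' + 2 ≤ i) →
    ∀ (p : ℕ) (w : ℕ → ℕ), p < n → (∀ j, j < n → w j = if j = p then 1 else 0) →
    ∃ p', p' < n ∧ (p' = p ∨ (p' = p + 1 ∧ p ∈ s)) ∧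
      ∀ j, j < n → runNet s w j = if j = p' then 1 else 0 := by
  intro s
  induction s with
  | nil => intro _ _ p w hp hw; exact ⟨p, hp, Or.inl rfl, hw⟩
  | cons i s ih =>
    intro hval hpair p w hp hw
    have hi : i + 1 < n := hval i (by simp)
    have hw1 := cswap_ind1 hi hp w hw
    have hpair' := hpair.tail
    have hfar : ∀ i' ∈ s, i + 2 ≤ i' ∨ i' + 2 ≤ i := fun i' h =>
      (List.pairwise_cons.mp hpair).1 i' h
    have hval' : ∀ i' ∈ s, i' + 1 < n := fun i' h => hval i' (by simp [h])
    by_cases hip : i = p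
    · simp only [if_pos hip] at hw1
      obtain ⟨p', hp'n, hcase, hrun⟩ := ih hval' hpair' (p+1) (cswap i w) (by omega) hw1
      refine ⟨p', hp'n, ?_, ?_⟩
      · rcases hcase with h | ⟨h, hmem⟩
        · exact Or.inr ⟨h, by simp [hip]⟩
        · exfalso; rcases hfar _ hmem with h' | h' <;> omega
      · simpa [runNet, List.foldl_cons] using hrun
    · simp only [if_neg hip] at hw1
      obtain ⟨p', hp'n, hcase, hrun⟩ := ih hval' hpair' p (cswap i w) hp hw1
      refine ⟨p', hp'n, ?_, ?_⟩
      · rcases hcase with h | ⟨h, hmem⟩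
        · exact Or.inl h
        · exact Or.inr ⟨h, by simp [hmem]⟩
      · simpa [runNet, List.foldl_cons] using hrun

/-- two-ones slice lemma -/
lemma slice2 {n : ℕ} : ∀ (s : List ℕ), (∀ i ∈ s, i + 1 < n) →
    s.Pairwise (fun i i' => i + 2 ≤ i' ∨ i' + 2 ≤ i) →
    ∀ (p q : ℕ) (w : ℕ → ℕ), p < q → q < n →
    (∀ j, j < n → w j = if j = p ∨ j = q then 1 else 0) →
    ∃ p' q', p' < q' ∧ q' < n ∧
      (p' = p ∨ (p' = p + 1 ∧ p ∈ s ∧ p + 1 < q)) ∧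
      (q' = q ∨ (q' = q + 1 ∧ q ∈ s)) ∧
      ∀ j, j < n → runNet s w j = if j = p' ∨ j = q' then 1 else 0 := by
  intro s
  induction s with
  | nil => intro _ _ p q w hpq hq hw; exact ⟨p, q, hpq, hq, Or.inl rfl, Or.inl rfl, hw⟩
  | cons i s ih =>
    intro hval hpair p q w hpq hq hw
    have hi : i + 1 < n := hval i (by simp)
    have hw1 := cswap_ind2 hi hpq hq w hw
    have hpair' := hpair.tail
    have hfar : ∀ i' ∈ s, i + 2 ≤ i' ∨ i' + 2 ≤ i := fun i' h =>
      (List.pairwise_cons.mp hpair).1 i' h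
    have hval' : ∀ i' ∈ s, i' + 1 < n := fun i' h => hval i' (by simp [h])
    set p₁ := if i = p ∧ i + 1 ≠ q then p + 1 else p with hp₁
    set q₁ := if i = q then q + 1 else q with hq₁
    have hp₁q₁ : p₁ < q₁ := by
      rw [hp₁, hq₁]; split_ifs <;> omega
    have hq₁n : q₁ < n := by
      rw [hq₁]; split_ifs with h
      · omega
      · exact hq
    obtain ⟨p', q', hp'q', hq'n, hpc, hqc, hrun⟩ :=
      ih hval' hpair' p₁ q₁ (cswap i w) hp₁q₁ hq₁n hw1
    refine ⟨p', q', hp'q', hq'n, ?_, ?_, ?_⟩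
    · by_cases hip : i = p ∧ i + 1 ≠ q
      · rw [hp₁, if_pos hip] at hpc
        rcases hpc with h | ⟨h, hmem, _⟩
        · exact Or.inr ⟨h, by simp [hip.1], by omega⟩
        · exfalso; rcases hfar _ hmem with h' | h' <;> omega
      · rw [hp₁, if_neg hip] at hpc
        rcases hpc with h | ⟨h, hmem, hlt⟩
        · exact Or.inl h
        · refine Or.inr ⟨h, by simp [hmem], ?_⟩
          by_cases hiq : i = q
          · rw [hq₁, if_pos hiq] at hlt
            -- p + 1 < q + 1; if p + 1 = q then p ∈ s contradicts far from i = q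
            rcases Nat.lt_or_ge (p+1) q with h' | h'
            · exact h'
            · exfalso
              have : p + 1 = q := by omega
              rcases hfar _ hmem with h'' | h'' <;> omega
          · rw [hq₁, if_neg hiq] at hlt; exact hlt
    · by_cases hiq : i = q
      · rw [hq₁, if_pos hiq] at hqc
        rcases hqc with h | ⟨h, hmem⟩
        · exact Or.inr ⟨h, by simp [hiq]⟩
        · exfalso; rcases hfar _ hmem with h' | h' <;> omega
      · rw [hq₁, if_neg hiq] at hqc
        rcases hqc with h | ⟨h, hmem⟩
        · exact Or.inl h
        · exact Or.inr ⟨h, by simp [hmem]⟩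
    · simpa [runNet, List.foldl_cons] using hrun

/-- iterate slices, one 1 -/
lemma runA {n : ℕ} : ∀ (Cs : List (List ℕ)),
    (∀ s ∈ Cs, (∀ i ∈ s, i + 1 < n) ∧ s.Pairwise (fun i i' => i + 2 ≤ i' ∨ i' + 2 ≤ i)) →
    ∀ (p : ℕ) (w : ℕ → ℕ), p < n → (∀ j, j < n → w j = if j = p then 1 else 0) →
    ∃ p', p' < n ∧ p' ≤ p + Cs.length ∧
      ∀ j, j < n → Cs.foldl (fun w s => runNet s w) w j = if j = p' then 1 else 0 := by
  intro Cs
  induction Cs with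
  | nil => intro _ p w hp hw; exact ⟨p, hp, by simp, hw⟩
  | cons s Cs ih =>
    intro hval p w hp hw
    obtain ⟨p₁, hp₁n, hc, hrun⟩ :=
      slice1 s (hval s (by simp)).1 (hval s (by simp)).2 p w hp hw
    obtain ⟨p', hp'n, hle, hrun'⟩ :=
      ih (fun s' hs' => hval s' (by simp [hs'])) p₁ (runNet s w) hp₁n hrun
    refine ⟨p', hp'n, ?_, ?_⟩
    · rcases hc with h | ⟨h, _⟩ <;> simp only [List.length_cons] <;> omega
    · simpa using hrun'

/-- iterate slices, two 1s -/
lemma runC {n : ℕ} : ∀ (Cs : List (List ℕ)),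
    (∀ s ∈ Cs, (∀ i ∈ s, i + 1 < n) ∧ s.Pairwise (fun i i' => i + 2 ≤ i' ∨ i' + 2 ≤ i)) →
    ∀ (p q : ℕ) (w : ℕ → ℕ), p < q → q < n →
    (∀ j, j < n → w j = if j = p ∨ j = q then 1 else 0) →
    ∃ p' q', p' < q' ∧ q' < n ∧ p' + q' ≤ p + q + 2 * Cs.length ∧
      ∀ j, j < n → Cs.foldl (fun w s => runNet s w) w j = if j = p' ∨ j = q' then 1 else 0 := by
  intro Cs
  induction Cs with
  | nil => intro _ p q w hpq hq hw; exact ⟨p, q, hpq, hq, by simp, hw⟩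
  | cons s Cs ih =>
    intro hval p q w hpq hq hw
    obtain ⟨p₁, q₁, hp₁q₁, hq₁n, hpc, hqc, hrun⟩ :=
      slice2 s (hval s (by simp)).1 (hval s (by simp)).2 p q w hpq hq hw
    obtain ⟨p', q', h1, h2, h3, hrun'⟩ :=
      ih (fun s' hs' => hval s' (by simp [hs'])) p₁ q₁ (runNet s w) hp₁q₁ hq₁n hrun
    refine ⟨p', q', h1, h2, ?_, ?_⟩
    · have hp₁ : p₁ ≤ p + 1 := by rcases hpc with h | ⟨h, _⟩ <;> omega
      have hq₁ : q₁ ≤ q + 1 := by rcases hqc with h | ⟨h, _⟩ <;> omega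
      simp only [List.length_cons]; omega
    · simpa using hrun'

/-- for `n > 2`, an adjacent-comparator sorting network organized
into time-slices of disjoint comparators has depth at least `n`. -/
theorem stmt11 (n : ℕ) (hn : 2 < n) (C : List (List ℕ))
    (hvalid : ∀ s ∈ C, (∀ i ∈ s, i + 1 < n) ∧
      s.Pairwise fun i i' => i + 2 ≤ i' ∨ i' + 2 ≤ i)
    (hsort : ∀ σ : Equiv.Perm (Fin n), ∀ i j, i < j → j < n →
      runNet C.flatten (permInput n σ) i ≤ runNet C.flatten (permInput n σ) j) :
    n ≤ C.length := by
  by_contra hlen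
  push_neg at hlen
  have hmono : ∀ c : ℕ, Monotone (fun x => if c ≤ x then 1 else 0 : ℕ → ℕ) := by
    intro c a b hab
    dsimp only
    split_ifs with h1 h2 <;> omega
  have husort : ∀ (c : ℕ) (σ : Equiv.Perm (Fin n)) (w : ℕ → ℕ),
      w = (fun x => if c ≤ x then 1 else 0) ∘ permInput n σ →
      ∀ i j, i < j → j < n → runNet C.flatten w i ≤ runNet C.flatten w j := by
    intro c σ w hw i j hij hjn
    rw [hw, runNet_map _ (hmono c)]
    exact hmono c (hsort σ i j hij hjn)
  -- ### Input A : single 1 at position 0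
  set σA : Equiv.Perm (Fin n) := Equiv.swap ⟨0, by omega⟩ ⟨n-1, by omega⟩ with hσA
  set wA : ℕ → ℕ := (fun x => if n - 1 ≤ x then 1 else 0) ∘ permInput n σA with hwA
  have hwA0 : ∀ j, j < n → wA j = if j = 0 then 1 else 0 := by
    intro j hj
    simp only [hwA, Function.comp, permInput, dif_pos hj, hσA, Equiv.swap_apply_def]
    simp only [Fin.mk.injEq, Fin.ext_iff, apply_ite (Fin.val)]
    split_ifs <;> omega
  have hsortA := husort (n-1) σA wA hwA
  -- C is nonempty
  obtain ⟨s₀, C', rfl⟩ : ∃ s₀ C', C = s₀ :: C' := by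
    cases C with
    | nil =>
      exfalso
      have h1 := hsortA 0 2 (by omega) (by omega)
      have e0 : runNet ([] : List (List ℕ)).flatten wA 0 = wA 0 := rfl
      have e2 : runNet ([] : List (List ℕ)).flatten wA 2 = wA 2 := rfl
      rw [e0, e2, hwA0 0 (by omega), hwA0 2 (by omega)] at h1
      simp at h1
    | cons s₀ C' => exact ⟨s₀, C', rfl⟩
  obtain ⟨p₁, hp₁n, hp₁c, hw₁⟩ :=
    slice1 s₀ (hvalid s₀ (by simp)).1 (hvalid s₀ (by simp)).2 0 wA (by omega) hwA0
  obtain ⟨pf, hpfn, hpfle, hu⟩ :=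
    runA C' (fun s hs => hvalid s (by simp [hs])) p₁ (runNet s₀ wA) hp₁n hw₁
  have huA : ∀ j, j < n → runNet ((s₀ :: C').flatten) wA j = if j = pf then 1 else 0 := by
    intro j hj
    rw [runNet_flatten, List.foldl_cons]
    exact hu j hj
  have hpf : pf = n - 1 := by
    by_contra hne
    have h1 := hsortA pf (n-1) (by omega) (by omega)
    rw [huA pf hpfn, huA (n-1) (by omega)] at h1
    rw [if_pos rfl, if_neg (by omega)] at h1
    omega
  have hClen : C'.length = n - 2 := by
    have := hlen
    simp only [List.length_cons] at this
    rcases hp₁c with h | ⟨h, _⟩ <;> omega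
  have h0s₀ : 0 ∈ s₀ := by
    rcases hp₁c with h | ⟨_, hmem⟩
    · omega
    · exact hmem
  have h1s₀ : 1 ∉ s₀ := by
    intro h1mem
    have hsymm : Symmetric (fun i i' : ℕ => i + 2 ≤ i' ∨ i' + 2 ≤ i) := by
      intro a b h; tauto
    haveI : Std.Symm (fun i i' : ℕ => i + 2 ≤ i' ∨ i' + 2 ≤ i) := ⟨fun a b h => hsymm h⟩
    have := List.Pairwise.forall (hvalid s₀ (by simp)).2 h0s₀ h1mem (by omega)
    omega
  -- C' is nonempty
  obtain ⟨s₁, C'', rfl⟩ : ∃ s₁ C'', C' = s₁ :: C'' := by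
    cases C' with
    | nil => exfalso; simp at hClen; omega
    | cons s₁ C'' => exact ⟨s₁, C'', rfl⟩
  -- ### Input C : two 1s at positions 0, 1
  set σC : Equiv.Perm (Fin n) :=
    Equiv.swap ⟨0, by omega⟩ ⟨n-2, by omega⟩ * Equiv.swap ⟨1, by omega⟩ ⟨n-1, by omega⟩ with hσC
  set wC : ℕ → ℕ := (fun x => if n - 2 ≤ x then 1 else 0) ∘ permInput n σC with hwC
  have hwC0 : ∀ j, j < n → wC j = if j = 0 ∨ j = 1 then 1 else 0 := by
    intro j hj
    simp only [hwC, Function.comp, permInput, dif_pos hj, hσC, Equiv.Perm.mul_apply,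
      Equiv.swap_apply_def]
    simp only [Fin.mk.injEq, Fin.ext_iff, apply_ite (Fin.val)]
    split_ifs <;> first | omega | tauto
  have hsortC := husort (n-2) σC wC hwC
  -- slice s₀ : nothing moves
  obtain ⟨P₀, Q₀, hPQ₀, hQ₀n, hPc₀, hQc₀, hrun₀⟩ :=
    slice2 s₀ (hvalid s₀ (by simp)).1 (hvalid s₀ (by simp)).2 0 1 wC (by omega) (by omega) hwC0
  have hP₀ : P₀ = 0 := by rcases hPc₀ with h | ⟨_, _, h⟩ <;> omega
  have hQ₀ : Q₀ = 1 := by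
    rcases hQc₀ with h | ⟨_, hmem⟩
    · exact h
    · exact absurd hmem h1s₀
  rw [hP₀, hQ₀] at hrun₀
  -- slice s₁ : at most the front one moves
  obtain ⟨P₁, Q₁, hPQ₁, hQ₁n, hPc₁, hQc₁, hrun₁⟩ :=
    slice2 s₁ (hvalid s₁ (by simp)).1 (hvalid s₁ (by simp)).2 0 1 (runNet s₀ wC)
      (by omega) (by omega) hrun₀
  have hP₁ : P₁ = 0 := by rcases hPc₁ with h | ⟨_, _, h⟩ <;> omega
  have hQ₁ : Q₁ ≤ 2 := by rcases hQc₁ with h | ⟨h, _⟩ <;> omega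
  -- remaining slices
  obtain ⟨P, Q, hPQ, hQn, hPQle, hrunC⟩ :=
    runC C'' (fun s hs => hvalid s (by simp [hs])) P₁ Q₁ (runNet s₁ (runNet s₀ wC))
      hPQ₁ hQ₁n hrun₁
  have huC : ∀ j, j < n →
      runNet ((s₀ :: s₁ :: C'').flatten) wC j = if j = P ∨ j = Q then 1 else 0 := by
    intro j hj
    rw [runNet_flatten, List.foldl_cons, List.foldl_cons]
    exact hrunC j hj
  -- final positions must be n-2 and n-1
  have hAfter : ∀ j, P < j → j < n → j = Q := by
    intro j hPj hjn
    by_contra hne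
    have h1 := hsortC P j hPj hjn
    rw [huC P (by omega), huC j hjn] at h1
    rw [if_pos (Or.inl rfl), if_neg (by omega)] at h1
    omega
  have hPge : n - 2 ≤ P := by
    by_contra h
    have h1 := hAfter (P+1) (by omega) (by omega)
    have h2 := hAfter (P+2) (by omega) (by omega)
    omega
  have hClen'' : C''.length = n - 3 := by
    simp only [List.length_cons] at hClen
    omega
  -- contradiction : 2n - 3 ≤ 2n - 4
  have hfinal : P + Q = 2 * n - 3 := by
    have hQ : Q = n - 1 := by
      have := hAfter (n-1) (by omega) (by omega)
      omega
    omega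
  omega
end
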